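/- arXiv:1508.07199 — 11 statements merged into one kernel-verified Lean document; each statement's English description precedes it below -/
import Mathlib

section
/- Let T be the 3×3 upper-triangular matrix with diagonal entries all equal to ω ∈ ℂ, (1,2)-entry α, (2,3)-entry β, and all other entries zero, where |ω| < 1. Then T is a contraction (operator norm at most 1) if and only if |α| ≤ 1 − |ω|², |β| ≤ 1 − |ω|², and |αβω|² ≤ ((1−|ω|²)² − |α|²)·((1−|ω|²)² − |β|²). -/
/-!
`‖T‖ ≤ 1` says that the Hermitian form `‖v‖² - ‖T v‖²` in `v = (x, y, z)` is positive
semidefinite. Writing `d = 1 - |ω|²`, minimising over `x` (a Schur complement with respect to the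
entry `d`) leaves the binary form
`((d² - |α|²) / d) |y|² + (d - |β|²) |z|² - 2 Re (ω β̄ y z̄)`,
which is nonnegative iff its diagonal is and `|ωβ|² ≤ ((d² - |α|²) / d) (d - |β|²)`.
The identity `(d² - a)(d² - b) - abw = d ((d² - a)(d - b) - wbd)` (where `w = 1 - d`) turns these
into the stated conditions.
-/

open Complex ComplexConjugate Matrix

lemma norm_toEuclideanCLM_le_one_iff {𝕜 n : Type*} [RCLike 𝕜] [Fintype n] [DecidableEq n]
    (A : Matrix n n 𝕜) :
    ‖toEuclideanCLM (n := n) (𝕜 := 𝕜) A‖ ≤ 1 ↔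
      ∀ v : n → 𝕜, ∑ i, ‖(A *ᵥ v) i‖ ^ 2 ≤ ∑ i, ‖v i‖ ^ 2 := by
  rw [ContinuousLinearMap.opNorm_le_iff zero_le_one,
    (WithLp.equiv 2 (n → 𝕜)).symm.forall_congr_left]
  refine forall_congr' fun v => ?_
  rw [one_mul, ← sq_le_sq₀ (norm_nonneg _) (norm_nonneg _), EuclideanSpace.norm_sq_eq,
    EuclideanSpace.norm_sq_eq]
  rfl

lemma norm_toEuclideanCLM_le_one_iff_forall (ω α β : ℂ) :
    ‖toEuclideanCLM (𝕜 := ℂ) !![ω, α, 0; 0, ω, β; 0, 0, ω]‖ ≤ 1 ↔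
      ∀ x y z : ℂ, ‖ω * x + α * y‖ ^ 2 + ‖ω * y + β * z‖ ^ 2 + ‖ω * z‖ ^ 2 ≤
        ‖x‖ ^ 2 + ‖y‖ ^ 2 + ‖z‖ ^ 2 := by
  rw [norm_toEuclideanCLM_le_one_iff]
  simp only [Fin.forall_fin_succ_pi, Fin.forall_fin_zero_pi]
  simp [Fin.sum_univ_three, mulVec, dotProduct]

lemma norm_mul_add_mul_sq (a b x y : ℂ) :
    ‖a * x + b * y‖ ^ 2 =
      ‖a‖ ^ 2 * ‖x‖ ^ 2 + ‖b‖ ^ 2 * ‖y‖ ^ 2 + 2 * (a * conj b * (x * conj y)).re := by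
  simp only [Complex.sq_norm, normSq_add, map_mul]
  rw [show a * x * (conj b * conj y) = a * conj b * (x * conj y) by ring]

lemma norm_mul_conj_sq (a b : ℂ) : ‖a * conj b‖ ^ 2 = ‖a‖ ^ 2 * ‖b‖ ^ 2 := by
  rw [norm_mul, Complex.norm_conj, mul_pow]

lemma two_re_mul_conj_le (c y z : ℂ) {p q : ℝ} (hp : 0 ≤ p) (hq : 0 ≤ q)
    (hc : ‖c‖ ^ 2 ≤ p * q) :
    2 * (c * (y * conj z)).re ≤ p * ‖y‖ ^ 2 + q * ‖z‖ ^ 2 := by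
  have hre : (c * (y * conj z)).re ≤ ‖c‖ * ‖y‖ * ‖z‖ := by
    simpa [mul_assoc] using re_le_norm (c * (y * conj z))
  have hsq : (2 * (‖c‖ * ‖y‖ * ‖z‖)) ^ 2 ≤ (p * ‖y‖ ^ 2 + q * ‖z‖ ^ 2) ^ 2 := by
    nlinarith [sq_nonneg (p * ‖y‖ ^ 2 - q * ‖z‖ ^ 2), mul_nonneg (sq_nonneg ‖y‖) (sq_nonneg ‖z‖)]
  have := (sq_le_sq₀ (by positivity) (by positivity)).1 hsq
  linarith

lemma forall_two_re_mul_conj_le_iff (p q : ℝ) (c : ℂ) :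
    (∀ y z : ℂ, 2 * (c * (y * conj z)).re ≤ p * ‖y‖ ^ 2 + q * ‖z‖ ^ 2) ↔
      0 ≤ p ∧ 0 ≤ q ∧ ‖c‖ ^ 2 ≤ p * q := by
  refine ⟨fun h => ?_, fun ⟨hp, hq, hc⟩ y z => two_re_mul_conj_le c y z hp hq hc⟩
  have hp : 0 ≤ p := by simpa using h 1 0
  have hq : 0 ≤ q := by simpa using h 0 1
  have hdisc : discrim q (-2 * ‖c‖ ^ 2) (p * ‖c‖ ^ 2) ≤ 0 := by
    refine discrim_le_zero fun t => ?_
    have := h (conj c) t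
    rw [conj_ofReal, ← mul_assoc, mul_conj'] at this
    norm_cast at this
    rw [Complex.norm_conj, Real.norm_eq_abs, sq_abs] at this
    linarith
  refine ⟨hp, hq, ?_⟩
  unfold discrim at hdisc
  nlinarith [sq_nonneg ‖c‖, mul_nonneg hp hq]

lemma forall_two_re_mul_conj_le_add_iff {d : ℝ} (hd : 0 < d) (c y : ℂ) (r : ℝ) :
    (∀ x : ℂ, 2 * (c * (x * conj y)).re ≤ d * ‖x‖ ^ 2 + r) ↔ ‖c‖ ^ 2 * ‖y‖ ^ 2 / d ≤ r := by
  refine ⟨fun h => ?_, fun h x => ?_⟩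
  · -- the minimiser `x = c̄ y / d`
    have := h (conj c * y * (d⁻¹ : ℝ))
    rw [show c * (conj c * y * (d⁻¹ : ℝ) * conj y) = c * conj c * (y * conj y) * (d⁻¹ : ℝ) by ring,
      mul_conj', mul_conj'] at this
    norm_cast at this
    rw [norm_mul, norm_mul, Complex.norm_conj, Complex.norm_real, Real.norm_eq_abs, abs_inv,
      abs_of_pos hd] at this
    have hsq : d * (‖c‖ * ‖y‖ * d⁻¹) ^ 2 = ‖c‖ ^ 2 * ‖y‖ ^ 2 * d⁻¹ := by field_simp
    rw [div_eq_mul_inv]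
    linarith
  · have := two_re_mul_conj_le c x y hd.le (div_nonneg (sq_nonneg ‖c‖) hd.le)
      (by rw [mul_div_cancel₀ _ hd.ne'])
    rw [div_mul_eq_mul_div] at this
    linarith

lemma forall_norm_sq_le_iff {ω : ℂ} (hω : ‖ω‖ < 1) (α β : ℂ) :
    (∀ x y z : ℂ, ‖ω * x + α * y‖ ^ 2 + ‖ω * y + β * z‖ ^ 2 + ‖ω * z‖ ^ 2 ≤
        ‖x‖ ^ 2 + ‖y‖ ^ 2 + ‖z‖ ^ 2) ↔
      0 ≤ ((1 - ‖ω‖ ^ 2) ^ 2 - ‖α‖ ^ 2) / (1 - ‖ω‖ ^ 2) ∧ 0 ≤ 1 - ‖ω‖ ^ 2 - ‖β‖ ^ 2 ∧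
        ‖ω‖ ^ 2 * ‖β‖ ^ 2 ≤
          ((1 - ‖ω‖ ^ 2) ^ 2 - ‖α‖ ^ 2) / (1 - ‖ω‖ ^ 2) * (1 - ‖ω‖ ^ 2 - ‖β‖ ^ 2) := by
  have hd : 0 < 1 - ‖ω‖ ^ 2 := by nlinarith [norm_nonneg ω]
  rw [← norm_mul_conj_sq, ← forall_two_re_mul_conj_le_iff]
  calc _ ↔ ∀ y z x : ℂ, 2 * (ω * conj α * (x * conj y)).re ≤ (1 - ‖ω‖ ^ 2) * ‖x‖ ^ 2 +
        ((1 - ‖ω‖ ^ 2 - ‖α‖ ^ 2) * ‖y‖ ^ 2 + (1 - ‖ω‖ ^ 2 - ‖β‖ ^ 2) * ‖z‖ ^ 2 -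
          2 * (ω * conj β * (y * conj z)).re) := by
        have hexpand (x y z : ℂ) :
            ‖ω * x + α * y‖ ^ 2 + ‖ω * y + β * z‖ ^ 2 + ‖ω * z‖ ^ 2 =
              ‖ω‖ ^ 2 * (‖x‖ ^ 2 + ‖y‖ ^ 2 + ‖z‖ ^ 2) + ‖α‖ ^ 2 * ‖y‖ ^ 2 + ‖β‖ ^ 2 * ‖z‖ ^ 2 +
                2 * (ω * conj α * (x * conj y)).re + 2 * (ω * conj β * (y * conj z)).re := by
          rw [norm_mul_add_mul_sq, norm_mul_add_mul_sq, norm_mul, mul_pow]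
          ring
        simp only [hexpand]
        exact ⟨fun h y z x => by linarith [h x y z], fun h x y z => by linarith [h y z x]⟩
    _ ↔ _ := by
        simp_rw [forall_two_re_mul_conj_le_add_iff hd, norm_mul_conj_sq]
        refine forall₂_congr fun y z => ?_
        have hschur : ‖ω‖ ^ 2 * ‖α‖ ^ 2 * ‖y‖ ^ 2 / (1 - ‖ω‖ ^ 2) =
            (1 - ‖ω‖ ^ 2 - ‖α‖ ^ 2 - ((1 - ‖ω‖ ^ 2) ^ 2 - ‖α‖ ^ 2) / (1 - ‖ω‖ ^ 2)) * ‖y‖ ^ 2 := by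
          field_simp
          ring
        rw [hschur]
        constructor <;> intro h <;> linarith

lemma le_one_sub_sq_of_le_one_sub {w a b : ℝ} (hw : 0 ≤ w) (hw1 : w < 1) (ha : 0 ≤ a)
    (hb : 0 ≤ b) (h1 : a ≤ (1 - w) ^ 2) (h2 : b ≤ 1 - w)
    (h3 : a * b * w ≤ ((1 - w) ^ 2 - a) * ((1 - w) ^ 2 - b)) : b ≤ (1 - w) ^ 2 := by
  by_contra! hlt
  have hd : 0 < (1 - w) ^ 2 := by
    have : 0 < 1 - w := by linarith
    positivity
  have hprod : ((1 - w) ^ 2 - a) * ((1 - w) ^ 2 - b) = 0 :=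
    le_antisymm (mul_nonpos_of_nonneg_of_nonpos (by linarith) (by linarith))
      (h3.trans' (by positivity))
  have ha' : a = (1 - w) ^ 2 := by
    rcases mul_eq_zero.1 hprod with h | h <;> linarith
  have hw0 : w = 0 := by
    have habw : a * b * w = 0 := le_antisymm (hprod ▸ h3) (by positivity)
    exact (mul_eq_zero.1 habw).resolve_left (mul_pos (ha' ▸ hd) (hd.trans hlt)).ne'
  subst hw0
  norm_num at hlt h2
  linarith

lemma schur_conditions_iff {w a b : ℝ} (hw : 0 ≤ w) (hw1 : w < 1) (ha : 0 ≤ a) (hb : 0 ≤ b) :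
    (0 ≤ ((1 - w) ^ 2 - a) / (1 - w) ∧ 0 ≤ 1 - w - b ∧
        w * b ≤ ((1 - w) ^ 2 - a) / (1 - w) * (1 - w - b)) ↔
      a ≤ (1 - w) ^ 2 ∧ b ≤ (1 - w) ^ 2 ∧ a * b * w ≤ ((1 - w) ^ 2 - a) * ((1 - w) ^ 2 - b) := by
  have hd : 0 < 1 - w := by linarith
  have key : ((1 - w) ^ 2 - a) * ((1 - w) ^ 2 - b) - a * b * w
      = (1 - w) * (((1 - w) ^ 2 - a) * (1 - w - b) - w * b * (1 - w)) := by ring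
  have h3 : w * b ≤ ((1 - w) ^ 2 - a) / (1 - w) * (1 - w - b) ↔
      a * b * w ≤ ((1 - w) ^ 2 - a) * ((1 - w) ^ 2 - b) := by
    rw [div_mul_eq_mul_div, le_div_iff₀ hd, ← sub_nonneg, ← mul_nonneg_iff_of_pos_left hd, ← key,
      sub_nonneg]
  rw [le_div_iff₀ hd, zero_mul, sub_nonneg, sub_nonneg, h3]
  refine ⟨fun ⟨h1, h2, h3⟩ => ⟨h1, le_one_sub_sq_of_le_one_sub hw hw1 ha hb h1 h2 h3, h3⟩,
    fun ⟨h1, h2, h3⟩ => ⟨h1, h2.trans ?_, h3⟩⟩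
  nlinarith

/-- Contractivity criterion for the 3×3 upper-triangular matrix
`[[ω, α, 0], [0, ω, β], [0, 0, ω]]` with `|ω| < 1`. -/
theorem stmt0 (ω α β : ℂ) (hω : ‖ω‖ < 1)
    (T : Matrix (Fin 3) (Fin 3) ℂ)
    (hT : T = !![ω, α, 0; 0, ω, β; 0, 0, ω]) :
    ‖Matrix.toEuclideanCLM (𝕜 := ℂ) T‖ ≤ 1 ↔
      ‖α‖ ≤ 1 - ‖ω‖ ^ 2 ∧ ‖β‖ ≤ 1 - ‖ω‖ ^ 2 ∧
        ‖α * β * ω‖ ^ 2 ≤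
          ((1 - ‖ω‖ ^ 2) ^ 2 - ‖α‖ ^ 2) * ((1 - ‖ω‖ ^ 2) ^ 2 - ‖β‖ ^ 2) := by
  subst hT
  have hw1 : ‖ω‖ ^ 2 < 1 := pow_lt_one₀ (norm_nonneg ω) hω two_ne_zero
  have hd : 0 ≤ 1 - ‖ω‖ ^ 2 := by linarith
  rw [norm_toEuclideanCLM_le_one_iff_forall, forall_norm_sq_le_iff hω,
    schur_conditions_iff (by positivity) hw1 (by positivity) (by positivity),
    ← sq_le_sq₀ (norm_nonneg α) hd, ← sq_le_sq₀ (norm_nonneg β) hd, norm_mul, norm_mul, mul_pow,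
    mul_pow]
end

section
/- Let ω ∈ ℂ with |ω| < 1 and α ∈ ℂ. The 3×3 matrix [[ω, α, 0], [0, ω, α], [0, 0, ω]] is a contraction if and only if |α| ≤ (1 − |ω|)·√(1 + |ω|). -/
/-!
Write `T` for the matrix, `r = ‖ω‖` and `a = ‖α‖`. The triangle inequality bounds `‖T x‖` by the
norm of the real matrix `R = !![r, a, 0; 0, r, a; 0, 0, r]` applied to `(‖x 0‖, ‖x 1‖, ‖x 2‖)`, and
a suitable choice of the phases of `x` turns this into an equality, so `T` is a contraction iff `R`
is. For `R`, completing the square in the first coordinate of `‖y‖² - ‖R y‖²` leaves a binary form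
in the other two, which is positive semidefinite when `a² ≤ (1 - r)²(1 + r)`; conversely, at
`y = (r a, 1 - r², a)` the defect is `((1 - r)²(1 + r) - a²)((1 + r)(1 - r²) + a²)`.
-/

open Complex

theorem two_mul_mul_le_of_sq_le_mul {P C K : ℝ} (hP : 0 ≤ P) (hC : 0 ≤ C) (hK : K ^ 2 ≤ P * C)
    (t u : ℝ) : 2 * K * t * u ≤ P * t ^ 2 + C * u ^ 2 := by
  rcases hP.eq_or_lt with rfl | hP
  · obtain rfl : K = 0 := by nlinarith [sq_nonneg K]
    nlinarith [sq_nonneg u]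
  · have hsq : P * (P * t ^ 2 + C * u ^ 2 - 2 * K * t * u)
        = (P * t - K * u) ^ 2 + (P * C - K ^ 2) * u ^ 2 := by ring
    nlinarith [sq_nonneg (P * t - K * u), mul_nonneg (sub_nonneg.2 hK) (sq_nonneg u)]

/-- The real matrix `!![r, a, 0; 0, r, a; 0, 0, r]` is a contraction of `ℝ³`. -/
def RealJordanContractive (r a : ℝ) : Prop :=
  ∀ s t u : ℝ, (r * s + a * t) ^ 2 + (r * t + a * u) ^ 2 + (r * u) ^ 2 ≤ s ^ 2 + t ^ 2 + u ^ 2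

theorem realJordanContractive_iff {r a : ℝ} (hr₀ : 0 ≤ r) (hr₁ : r < 1) :
    RealJordanContractive r a ↔ a ^ 2 ≤ (1 - r) ^ 2 * (1 + r) := by
  have hb : 0 < 1 - r ^ 2 := by nlinarith
  constructor
  · intro h
    have hy := h (r * a) (1 - r ^ 2) a
    have hdefect : (r * a) ^ 2 + (1 - r ^ 2) ^ 2 + a ^ 2
        - ((r * (r * a) + a * (1 - r ^ 2)) ^ 2 + (r * (1 - r ^ 2) + a * a) ^ 2 + (r * a) ^ 2)
        = ((1 - r) ^ 2 * (1 + r) - a ^ 2) * ((1 + r) * (1 - r ^ 2) + a ^ 2) := by ring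
    have hpos : 0 < (1 + r) * (1 - r ^ 2) + a ^ 2 := by positivity
    nlinarith
  · intro ha s t u
    set b := 1 - r ^ 2
    have hPC : (b * r * a) ^ 2 ≤ (b ^ 2 - a ^ 2) * (b * (b - a ^ 2)) := by
      have hdet : (b ^ 2 - a ^ 2) * (b * (b - a ^ 2)) - (b * r * a) ^ 2
          = b * (((1 + r) * b - a ^ 2) * ((1 - r) * b - a ^ 2)) := by ring
      have h₁ : 0 ≤ (1 + r) * b - a ^ 2 := by nlinarith
      have h₂ : 0 ≤ (1 - r) * b - a ^ 2 := by nlinarith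
      nlinarith [mul_nonneg hb.le (mul_nonneg h₁ h₂)]
    have hform := two_mul_mul_le_of_sq_le_mul (by nlinarith) (by nlinarith) hPC t u
    have hsq : b * (s ^ 2 + t ^ 2 + u ^ 2 - ((r * s + a * t) ^ 2 + (r * t + a * u) ^ 2 + (r * u) ^ 2))
        = (b * s - r * a * t) ^ 2 + ((b ^ 2 - a ^ 2) * t ^ 2 + b * (b - a ^ 2) * u ^ 2
            - 2 * (b * r * a) * t * u) := by ring
    nlinarith [sq_nonneg (b * s - r * a * t)]

section
variable (ω α : ℂ)

theorem norm_sq_toEuclideanCLM_jordan_apply (x : EuclideanSpace ℂ (Fin 3)) :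
    ‖Matrix.toEuclideanCLM (𝕜 := ℂ) !![ω, α, 0; 0, ω, α; 0, 0, ω] x‖ ^ 2 =
      ‖ω * x 0 + α * x 1‖ ^ 2 + ‖ω * x 1 + α * x 2‖ ^ 2 + ‖ω * x 2‖ ^ 2 := by
  rw [← WithLp.toLp_ofLp (p := 2) x, Matrix.toEuclideanCLM_toLp, EuclideanSpace.norm_sq_eq]
  simp [Fin.sum_univ_three, Matrix.mulVec, dotProduct]

theorem exists_norm_sq_toEuclideanCLM_jordan_eq (r a : ℝ) {p q : ℂ} (hp : ‖p‖ = 1) (hq : ‖q‖ = 1)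
    (s t u : ℝ) : ∃ x : EuclideanSpace ℂ (Fin 3), ‖x‖ ^ 2 = s ^ 2 + t ^ 2 + u ^ 2 ∧
      ‖Matrix.toEuclideanCLM (𝕜 := ℂ) !![r * p, a * q, 0; 0, r * p, a * q; 0, 0, r * p] x‖ ^ 2 =
        (r * s + a * t) ^ 2 + (r * t + a * u) ^ 2 + (r * u) ^ 2 := by
  have hp₀ : p ≠ 0 := norm_ne_zero_iff.1 (by rw [hp]; exact one_ne_zero)
  set w := q / p
  have hw : ‖w‖ = 1 := by simp [w, hp, hq]
  -- `w = q / p` aligns the phases of the two summands in each coordinate of the image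
  refine ⟨!₂[s * w ^ 2, t * w, u], ?_, ?_⟩
  · rw [EuclideanSpace.norm_sq_eq, Fin.sum_univ_three]
    simp [hw]
  · rw [norm_sq_toEuclideanCLM_jordan_apply]
    have e₀ : r * p * (s * w ^ 2) + a * q * (t * w) = ((r * s + a * t : ℝ) : ℂ) * (q * w) := by
      simp only [w]; push_cast; field_simp
    have e₁ : r * p * (t * w) + a * q * u = ((r * t + a * u : ℝ) : ℂ) * q := by
      simp only [w]; push_cast; field_simp
    simp only [Matrix.cons_val_zero, Matrix.cons_val_one, Matrix.cons_val_two, Matrix.tail_cons,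
      Matrix.head_cons, e₀, e₁]
    simp only [norm_mul, norm_real, Real.norm_eq_abs, hp, hq, hw, mul_one, mul_pow, sq_abs]

theorem norm_sq_toEuclideanCLM_jordan_apply_le (x : EuclideanSpace ℂ (Fin 3)) :
    ‖Matrix.toEuclideanCLM (𝕜 := ℂ) !![ω, α, 0; 0, ω, α; 0, 0, ω] x‖ ^ 2 ≤
      (‖ω‖ * ‖x 0‖ + ‖α‖ * ‖x 1‖) ^ 2 + (‖ω‖ * ‖x 1‖ + ‖α‖ * ‖x 2‖) ^ 2 + (‖ω‖ * ‖x 2‖) ^ 2 := by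
  rw [norm_sq_toEuclideanCLM_jordan_apply, norm_mul ω (x 2)]
  have h (i j : Fin 3) : ‖ω * x i + α * x j‖ ^ 2 ≤ (‖ω‖ * ‖x i‖ + ‖α‖ * ‖x j‖) ^ 2 := by
    gcongr
    exact (norm_add_le _ _).trans_eq (by rw [norm_mul, norm_mul])
  linarith [h 0 1, h 1 2]

theorem opNorm_toEuclideanCLM_jordan_le_one_iff :
    ‖Matrix.toEuclideanCLM (𝕜 := ℂ) !![ω, α, 0; 0, ω, α; 0, 0, ω]‖ ≤ 1 ↔
      RealJordanContractive ‖ω‖ ‖α‖ := by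
  set T := Matrix.toEuclideanCLM (𝕜 := ℂ) !![ω, α, 0; 0, ω, α; 0, 0, ω]
  constructor
  · intro hT s t u
    obtain ⟨x, hx, hTx⟩ := exists_norm_sq_toEuclideanCLM_jordan_eq ‖ω‖ ‖α‖
      (norm_exp_ofReal_mul_I ω.arg) (norm_exp_ofReal_mul_I α.arg) s t u
    rw [norm_mul_exp_arg_mul_I, norm_mul_exp_arg_mul_I] at hTx
    rw [← hx, ← hTx]
    gcongr
    simpa using T.le_of_opNorm_le hT x
  · intro h
    refine T.opNorm_le_bound zero_le_one fun x ↦ ?_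
    rw [one_mul, ← sq_le_sq₀ (norm_nonneg _) (norm_nonneg _), EuclideanSpace.norm_sq_eq x,
      Fin.sum_univ_three]
    exact (norm_sq_toEuclideanCLM_jordan_apply_le ω α x).trans (h _ _ _)

end

/-- The matrix `[[ω, α, 0], [0, ω, α], [0, 0, ω]]` with `|ω| < 1` is a contraction
iff `|α| ≤ (1 − |ω|)·√(1 + |ω|)`. -/
theorem stmt1 (ω α : ℂ) (hω : ‖ω‖ < 1) :
    ‖Matrix.toEuclideanCLM (𝕜 := ℂ) !![ω, α, 0; 0, ω, α; 0, 0, ω]‖ ≤ 1 ↔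
      ‖α‖ ≤ (1 - ‖ω‖) * Real.sqrt (1 + ‖ω‖) := by
  rw [opNorm_toEuclideanCLM_jordan_le_one_iff, realJordanContractive_iff (norm_nonneg ω) hω,
    ← sq_le_sq₀ (norm_nonneg α) (mul_nonneg (by linarith) (Real.sqrt_nonneg _)), mul_pow,
    Real.sq_sqrt (by positivity)]
end

section
/- For every fixed ω in the open unit disc, the supremum of |f′(ω)|² + |f″(ω)/2| over all holomorphic functions f : 𝔻 → ℂ with f(ω) = 0 and sup_{z∈𝔻}|f(z)| ≤ 1 equals 1 / ((1 − |ω|²)(1 − |ω|)). -/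
/-!
Write `f = (z - ω) k` with `k = dslope f ω`, so that `f'(ω) = k(ω)` and `f''(ω) = 2 k'(ω)`.
The Schur quotient `g = k (1 - ω̄ z) = f / B_ω`, where `B_ω z = (z - ω) / (1 - ω̄ z)`, is again
bounded by `1`: this is the Schwarz lemma for `f ∘ B_{-ω}`, since `B_{-ω}` is the disc
automorphism inverse to `B_ω`. The Schwarz–Pick inequality `|g'(ω)| (1 - |ω|²) ≤ 1 - |g(ω)|²`
then bounds `|k(ω)|² + |k'(ω)|` by `(1 + |ω|) / (1 - |ω|²)²`, and `f = B_ω` attains this value.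
-/

open Complex ComplexConjugate Filter Metric Set Topology

noncomputable def blaschke (a z : ℂ) : ℂ := (z - a) / (1 - conj a * z)

section Blaschke

variable {a z : ℂ}

lemma sq_norm_one_sub_conj_mul_sub_sq_norm_sub (a z : ℂ) :
    ‖1 - conj a * z‖ ^ 2 - ‖z - a‖ ^ 2 = (1 - ‖z‖ ^ 2) * (1 - ‖a‖ ^ 2) := by
  simp only [Complex.sq_norm, normSq_apply, sub_re, sub_im, one_re, one_im, mul_re, mul_im,
    conj_re, conj_im]
  ring

lemma norm_sub_le_norm_one_sub_conj_mul (ha : ‖a‖ ≤ 1) (hz : ‖z‖ ≤ 1) :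
    ‖z - a‖ ≤ ‖1 - conj a * z‖ := by
  have := sq_norm_one_sub_conj_mul_sub_sq_norm_sub a z
  have : 0 ≤ (1 - ‖z‖ ^ 2) * (1 - ‖a‖ ^ 2) :=
    mul_nonneg (by nlinarith [norm_nonneg z]) (by nlinarith [norm_nonneg a])
  exact le_of_pow_le_pow_left₀ two_ne_zero (norm_nonneg _) (by linarith)

lemma norm_sub_lt_norm_one_sub_conj_mul (ha : ‖a‖ < 1) (hz : ‖z‖ < 1) :
    ‖z - a‖ < ‖1 - conj a * z‖ := by
  have := sq_norm_one_sub_conj_mul_sub_sq_norm_sub a z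
  have : 0 < (1 - ‖z‖ ^ 2) * (1 - ‖a‖ ^ 2) :=
    mul_pos (by nlinarith [norm_nonneg z]) (by nlinarith [norm_nonneg a])
  exact lt_of_pow_lt_pow_left₀ 2 (norm_nonneg _) (by linarith)

lemma one_sub_conj_mul_ne_zero (ha : ‖a‖ < 1) (hz : ‖z‖ ≤ 1) : 1 - conj a * z ≠ 0 := by
  have : ‖conj a * z‖ < 1 := by
    rw [norm_mul, Complex.norm_conj]
    nlinarith [norm_nonneg a, norm_nonneg z]
  intro h
  rw [← sub_eq_zero.1 h, norm_one] at this
  exact this.false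

lemma norm_blaschke_le_one (ha : ‖a‖ < 1) (hz : ‖z‖ ≤ 1) : ‖blaschke a z‖ ≤ 1 := by
  rw [blaschke, norm_div]
  exact div_le_one_of_le₀ (norm_sub_le_norm_one_sub_conj_mul ha.le hz) (norm_nonneg _)

lemma norm_blaschke_lt_one (ha : ‖a‖ < 1) (hz : ‖z‖ < 1) : ‖blaschke a z‖ < 1 := by
  rw [blaschke, norm_div, div_lt_one (norm_pos_iff.2 (one_sub_conj_mul_ne_zero ha hz.le))]
  exact norm_sub_lt_norm_one_sub_conj_mul ha hz

lemma mapsTo_blaschke (ha : ‖a‖ < 1) : MapsTo (blaschke a) (ball 0 1) (ball 0 1) := by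
  intro z hz
  rw [mem_ball_zero_iff] at hz ⊢
  exact norm_blaschke_lt_one ha hz

lemma differentiableOn_blaschke (ha : ‖a‖ < 1) :
    DifferentiableOn ℂ (blaschke a) (closedBall 0 1) :=
  fun z hz => DifferentiableAt.differentiableWithinAt <| by
    have := one_sub_conj_mul_ne_zero ha (mem_closedBall_zero_iff.1 hz)
    unfold blaschke
    fun_prop (disch := assumption)

@[simp]
lemma blaschke_self (a : ℂ) : blaschke a a = 0 := by simp [blaschke]

lemma blaschke_neg_zero (a : ℂ) : blaschke (-a) 0 = a := by simp [blaschke]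

lemma blaschke_blaschke_neg (ha : ‖a‖ < 1) (hz : ‖z‖ < 1) : blaschke a (blaschke (-a) z) = z := by
  have h₁ : 1 + conj a * z ≠ 0 := by
    simpa using one_sub_conj_mul_ne_zero (a := -a) (by rwa [norm_neg]) hz.le
  have h₂ : 1 - conj a * a ≠ 0 := one_sub_conj_mul_ne_zero ha ha.le
  have h₃ : 1 + conj a * z - conj a * (z + a) = 1 - conj a * a := by ring
  simp only [blaschke, map_neg, neg_mul, sub_neg_eq_add]
  rw [div_sub' h₁, mul_div_assoc', one_sub_div h₁, h₃, div_div_div_cancel_right₀ h₁, div_eq_iff h₂]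
  ring

lemma one_sub_conj_mul_self (a : ℂ) : 1 - conj a * a = ((1 - ‖a‖ ^ 2 : ℝ) : ℂ) := by
  rw [mul_comm, mul_conj, normSq_eq_norm_sq]
  push_cast; ring

lemma norm_one_sub_conj_mul_self (ha : ‖a‖ < 1) : ‖1 - conj a * a‖ = 1 - ‖a‖ ^ 2 := by
  rw [one_sub_conj_mul_self, norm_real, Real.norm_of_nonneg]
  nlinarith [norm_nonneg a]

end Blaschke

section FactorAtPoint

variable {𝕜 : Type*} [NontriviallyNormedField 𝕜] {k : 𝕜 → 𝕜} {ω k' : 𝕜}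

lemma hasDerivAt_sub_mul (hk : HasDerivAt k k' ω) :
    HasDerivAt (fun z => (z - ω) * k z) (k ω) ω := by
  simpa using ((hasDerivAt_id ω).sub_const ω).fun_mul hk

lemma deriv_deriv_sub_mul [CompleteSpace 𝕜] (hk : AnalyticAt 𝕜 k ω) :
    deriv (deriv fun z => (z - ω) * k z) ω = 2 * deriv k ω := by
  have hderiv : deriv (fun z => (z - ω) * k z) =ᶠ[𝓝 ω] fun z => k z + (z - ω) * deriv k z := by
    filter_upwards [hk.eventually_analyticAt] with z hz
    simpa using (((hasDerivAt_id z).sub_const ω).fun_mul hz.differentiableAt.hasDerivAt).deriv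
  rw [hderiv.deriv_eq, (hk.differentiableAt.hasDerivAt.fun_add
    (hasDerivAt_sub_mul hk.deriv.differentiableAt.hasDerivAt)).deriv]
  ring

end FactorAtPoint

section BlaschkeDerivatives

variable {a : ℂ}

lemma blaschke_eq_sub_mul_inv (a : ℂ) : blaschke a = fun z => (z - a) * (1 - conj a * z)⁻¹ := rfl

lemma hasDerivAt_inv_one_sub_conj_mul (ha : ‖a‖ < 1) :
    HasDerivAt (fun z => (1 - conj a * z)⁻¹) (conj a / (1 - conj a * a) ^ 2) a := by
  refine ((((hasDerivAt_id a).const_mul (conj a)).const_sub 1).fun_inv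
    (one_sub_conj_mul_ne_zero ha ha.le)).congr_deriv ?_
  simp

lemma hasDerivAt_blaschke_self (ha : ‖a‖ < 1) :
    HasDerivAt (blaschke a) (1 - conj a * a)⁻¹ a :=
  hasDerivAt_sub_mul (hasDerivAt_inv_one_sub_conj_mul ha)

lemma deriv_deriv_blaschke_self (ha : ‖a‖ < 1) :
    deriv (deriv (blaschke a)) a = 2 * (conj a / (1 - conj a * a) ^ 2) := by
  have hk : AnalyticAt ℂ (fun z => (1 - conj a * z)⁻¹) a := by
    have := one_sub_conj_mul_ne_zero ha ha.le
    fun_prop (disch := assumption)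
  rw [blaschke_eq_sub_mul_inv, deriv_deriv_sub_mul hk, (hasDerivAt_inv_one_sub_conj_mul ha).deriv]

lemma sq_norm_deriv_add_half_norm_deriv_deriv_blaschke_self (ha : ‖a‖ < 1) :
    ‖deriv (blaschke a) a‖ ^ 2 + ‖deriv (deriv (blaschke a)) a‖ / 2 =
      1 / ((1 - ‖a‖ ^ 2) * (1 - ‖a‖)) := by
  have h₁ : 0 < 1 - ‖a‖ := by linarith
  have h₂ : 0 < 1 + ‖a‖ := by linarith [norm_nonneg a]
  rw [(hasDerivAt_blaschke_self ha).deriv, deriv_deriv_blaschke_self ha, norm_inv, norm_mul,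
    norm_div, norm_pow, norm_one_sub_conj_mul_self ha, Complex.norm_conj, Complex.norm_two,
    show 1 - ‖a‖ ^ 2 = (1 - ‖a‖) * (1 + ‖a‖) by ring]
  field_simp

end BlaschkeDerivatives

lemma sq_add_le_of_schwarzPick {r x y u : ℝ} (hr₀ : 0 ≤ r) (hr : r < 1) (hu₀ : 0 ≤ u)
    (hu : y * (1 - r ^ 2) - r * x ≤ u) (hSP : u * (1 - r ^ 2) ≤ 1 - (x * (1 - r ^ 2)) ^ 2) :
    x ^ 2 + y ≤ 1 / ((1 - r ^ 2) * (1 - r)) := by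
  have hA : 0 < 1 - r ^ 2 := by nlinarith
  have hx : x * (1 - r ^ 2) ≤ 1 := by nlinarith [mul_nonneg hu₀ hA.le]
  rw [show 1 / ((1 - r ^ 2) * (1 - r)) = (1 + r) / (1 - r ^ 2) ^ 2 by
    field_simp [(by linarith : 1 - r ≠ 0)]; ring, le_div_iff₀ (by positivity)]
  nlinarith [mul_le_mul_of_nonneg_right hu hA.le, mul_nonneg hr₀ (sub_nonneg.2 hx)]

section SchwarzPick

variable {f : ℂ → ℂ} {ω z : ℂ}

theorem norm_le_norm_blaschke_of_apply_eq_zero (hf : DifferentiableOn ℂ f (ball 0 1))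
    (hmaps : MapsTo f (ball 0 1) (closedBall 0 1)) (hω : ‖ω‖ < 1) (h0 : f ω = 0)
    (hz : ‖z‖ < 1) : ‖f z‖ ≤ ‖blaschke ω z‖ := by
  have hω' : ‖-ω‖ < 1 := by rwa [norm_neg]
  have hinv := blaschke_blaschke_neg hω' hz
  rw [neg_neg] at hinv
  have key := Complex.norm_le_norm_of_mapsTo_ball
    (hf.comp ((differentiableOn_blaschke hω').mono ball_subset_closedBall) (mapsTo_blaschke hω'))
    (hmaps.comp (mapsTo_blaschke hω')) (by rw [Function.comp_apply, blaschke_neg_zero, h0])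
    (norm_blaschke_lt_one hω hz)
  rwa [Function.comp_apply, hinv] at key

theorem norm_dslope_mul_le_one (hf : DifferentiableOn ℂ f (ball 0 1))
    (hmaps : MapsTo f (ball 0 1) (closedBall 0 1)) (hω : ‖ω‖ < 1) (h0 : f ω = 0)
    (hz : z ∈ ball (0 : ℂ) 1) : ‖dslope f ω z * (1 - conj ω * z)‖ ≤ 1 := by
  have off_diag : ∀ z ∈ ball (0 : ℂ) 1, z ≠ ω → ‖dslope f ω z * (1 - conj ω * z)‖ ≤ 1 := by
    intro z hz hne
    have hz' := mem_ball_zero_iff.1 hz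
    have hden : 0 < ‖1 - conj ω * z‖ := norm_pos_iff.2 (one_sub_conj_mul_ne_zero hω hz'.le)
    have hle := norm_le_norm_blaschke_of_apply_eq_zero hf hmaps hω h0 hz'
    rw [blaschke, norm_div, le_div_iff₀ hden] at hle
    rw [dslope_of_ne f hne, slope_def_field, h0, sub_zero, norm_mul, norm_div,
      div_mul_eq_mul_div, div_le_one (norm_pos_iff.2 (sub_ne_zero.2 hne))]
    exact hle
  obtain rfl | hne := eq_or_ne ω z
  · have hcont : ContinuousAt (fun z => dslope f ω z * (1 - conj ω * z)) ω :=
      (((differentiableOn_dslope (isOpen_ball.mem_nhds hz)).2 hf).continuousOn.continuousAt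
        (isOpen_ball.mem_nhds hz)).mul (by fun_prop)
    refine le_of_tendsto (hcont.norm.mono_left (nhdsWithin_le_nhds (s := {ω}ᶜ))) ?_
    filter_upwards [self_mem_nhdsWithin, nhdsWithin_le_nhds (isOpen_ball.mem_nhds hz)]
      with w hwω hw
    exact off_diag w hw hwω
  · exact off_diag z hz hne.symm

theorem norm_deriv_mul_le_one_sub_sq_norm (hf : DifferentiableOn ℂ f (ball 0 1))
    (hmaps : MapsTo f (ball 0 1) (closedBall 0 1)) (hω : ‖ω‖ < 1) :
    ‖deriv f ω‖ * (1 - ‖ω‖ ^ 2) ≤ 1 - ‖f ω‖ ^ 2 := by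
  have hωb : ω ∈ ball (0 : ℂ) 1 := mem_ball_zero_iff.2 hω
  rcases (mem_closedBall_zero_iff.1 (hmaps hωb)).eq_or_lt with hfω | hfω
  · have hconst : EqOn f (fun _ => f ω) (ball 0 1) :=
      Complex.eqOn_of_isPreconnected_of_isMaxOn_norm (convex_ball 0 1).isPreconnected
        isOpen_ball hf hωb fun z hz => by simpa [hfω] using hmaps hz
    rw [(eventuallyEq_of_mem (isOpen_ball.mem_nhds hωb) hconst).deriv_eq, deriv_const, hfω]
    simp
  · -- `blaschke (f ω) ∘ f` vanishes at `ω`, and `norm_dslope_mul_le_one` at `z = ω` bounds its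
    -- derivative.
    have hderiv : HasDerivAt (blaschke (f ω) ∘ f) ((1 - conj (f ω) * f ω)⁻¹ * deriv f ω) ω :=
      (hasDerivAt_blaschke_self hfω).comp ω
        (hf.differentiableAt (isOpen_ball.mem_nhds hωb)).hasDerivAt
    have key := norm_dslope_mul_le_one ((differentiableOn_blaschke hfω).comp hf hmaps)
      (fun z hz => mem_closedBall_zero_iff.2
        (norm_blaschke_le_one hfω (mem_closedBall_zero_iff.1 (hmaps hz))))
      hω (blaschke_self (f ω)) hωb
    rwa [dslope_same, hderiv.deriv, norm_mul, norm_mul, norm_inv,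
      norm_one_sub_conj_mul_self hfω, norm_one_sub_conj_mul_self hω, inv_mul_eq_div,
      div_mul_eq_mul_div, div_le_one (by nlinarith [norm_nonneg (f ω)])] at key

theorem sq_norm_deriv_add_half_norm_deriv_deriv_le (hf : DifferentiableOn ℂ f (ball 0 1))
    (hmaps : MapsTo f (ball 0 1) (closedBall 0 1)) (hω : ‖ω‖ < 1) (h0 : f ω = 0) :
    ‖deriv f ω‖ ^ 2 + ‖deriv (deriv f) ω‖ / 2 ≤ 1 / ((1 - ‖ω‖ ^ 2) * (1 - ‖ω‖)) := by
  have hωb : ω ∈ ball (0 : ℂ) 1 := mem_ball_zero_iff.2 hω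
  set k := dslope f ω
  have hkd : DifferentiableOn ℂ k (ball 0 1) :=
    (differentiableOn_dslope (isOpen_ball.mem_nhds hωb)).2 hf
  have hk : AnalyticAt ℂ k ω := hkd.analyticAt (isOpen_ball.mem_nhds hωb)
  have hfk : f = fun z => (z - ω) * k z := by
    funext z
    simpa [h0] using (sub_smul_dslope f ω z).symm
  set g := fun z => k z * (1 - conj ω * z)
  have hSP := norm_deriv_mul_le_one_sub_sq_norm (f := g) (hkd.mul (by fun_prop))
    (fun z hz => mem_closedBall_zero_iff.2 (norm_dslope_mul_le_one hf hmaps hω h0 hz)) hω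
  have hg : ‖g ω‖ = ‖k ω‖ * (1 - ‖ω‖ ^ 2) := by
    simp only [g, norm_mul, norm_one_sub_conj_mul_self hω]
  have hg' : deriv g ω = deriv k ω * (1 - conj ω * ω) - k ω * conj ω := by
    refine (hk.differentiableAt.hasDerivAt.fun_mul
      (((hasDerivAt_id' ω).const_mul (conj ω)).const_sub 1)).deriv.trans ?_
    ring
  have hg'_ge : ‖deriv k ω‖ * (1 - ‖ω‖ ^ 2) - ‖ω‖ * ‖k ω‖ ≤ ‖deriv g ω‖ := by
    have := norm_sub_norm_le (deriv k ω * (1 - conj ω * ω)) (k ω * conj ω)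
    rwa [norm_mul, norm_mul, norm_one_sub_conj_mul_self hω, Complex.norm_conj, mul_comm (‖k ω‖),
      ← hg'] at this
  rw [hfk, (hasDerivAt_sub_mul hk.differentiableAt.hasDerivAt).deriv, deriv_deriv_sub_mul hk,
    norm_mul, Complex.norm_two, mul_div_cancel_left₀ _ two_ne_zero]
  exact sq_add_le_of_schwarzPick (norm_nonneg ω) hω (norm_nonneg _) hg'_ge (hg ▸ hSP)

end SchwarzPick

/-- For fixed `ω` in the open unit disc, the supremum of `|f′(ω)|² + |f″(ω)/2|` over all
holomorphic `f : 𝔻 → ℂ` with `f(ω) = 0` and `sup |f| ≤ 1` equals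
`1 / ((1 − |ω|²)(1 − |ω|))`. -/
theorem stmt2 (ω : ℂ) (hω : ‖ω‖ < 1) :
    sSup {x : ℝ | ∃ f : ℂ → ℂ, DifferentiableOn ℂ f (ball 0 1) ∧
        (∀ z ∈ ball (0 : ℂ) 1, ‖f z‖ ≤ 1) ∧ f ω = 0 ∧
        x = ‖deriv f ω‖ ^ 2 + ‖deriv (deriv f) ω‖ / 2} =
      1 / ((1 - ‖ω‖ ^ 2) * (1 - ‖ω‖)) := by
  refine IsGreatest.csSup_eq ⟨⟨blaschke ω, ?_, ?_, blaschke_self ω, ?_⟩, ?_⟩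
  · exact (differentiableOn_blaschke hω).mono ball_subset_closedBall
  · exact fun z hz => norm_blaschke_le_one hω (mem_ball_zero_iff.1 hz).le
  · exact (sq_norm_deriv_add_half_norm_deriv_deriv_blaschke_self hω).symm
  · rintro x ⟨f, hf, hbound, h0, rfl⟩
    exact sq_norm_deriv_add_half_norm_deriv_deriv_le hf
      (fun z hz => mem_closedBall_zero_iff.2 (hbound z hz)) hω h0
end

section
/- For complex numbers a₁, a₂, the condition |a₁|² + |a₂| ≤ 1 holds if and only if the 3×3 Hermitian matrix [[1, c̄₁, c̄₂], [c₁, 1, c̄₁], [c₂, c₁, 1]] is positive semidefinite, where c₁ = a₁ and c₂ = a₂ + a₁². -/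
open scoped ComplexOrder

/-!
Write `t = 1 - ‖c₁‖²` for the leading 2 × 2 minor of the Toeplitz matrix `T(c₁, c₂)`; its
determinant is `t² - ‖c₂ - c₁²‖²`. If `T` is positive semidefinite, both minors are nonnegative,
which is `‖c₂ - c₁²‖ ≤ t`. Conversely, eliminating the first column and then the second one gives
`t • T = t • u uᴴ + v vᴴ + det T • e₃ e₃ᴴ`, a sum of positive semidefinite matrices when `t > 0`;
when `t = 0` the hypothesis forces `c₂ = c₁²` with `‖c₁‖ = 1`, and `T` has rank one.
-/

open Matrix Complex ComplexConjugate

def toeplitz3 (c₁ c₂ : ℂ) : Matrix (Fin 3) (Fin 3) ℂ :=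
  !![1, star c₁, star c₂; c₁, 1, star c₁; c₂, c₁, 1]

theorem det_toeplitz3 (c₁ c₂ : ℂ) :
    (toeplitz3 c₁ c₂).det = (((1 - ‖c₁‖ ^ 2) ^ 2 - ‖c₂ - c₁ ^ 2‖ ^ 2 : ℝ) : ℂ) := by
  simp only [toeplitz3, det_fin_three, of_apply, cons_val', cons_val_zero, cons_val_one, cons_val,
    cons_val_fin_one, mul_one, one_mul, RCLike.star_def, ofReal_sub, ofReal_pow, ofReal_one,
    ← mul_conj', map_sub, map_pow]
  ring

theorem det_toeplitz3_submatrix (c₁ c₂ : ℂ) :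
    ((toeplitz3 c₁ c₂).submatrix ![0, 1] ![0, 1]).det = ((1 - ‖c₁‖ ^ 2 : ℝ) : ℂ) := by
  rw [det_fin_two]
  simp [toeplitz3, ← mul_conj', mul_comm]

theorem toeplitz3_eq_vecMulVec_of_norm_eq_one {c₁ : ℂ} (h : ‖c₁‖ = 1) :
    toeplitz3 c₁ (c₁ ^ 2) = vecMulVec ![1, c₁, c₁ ^ 2] (star ![1, c₁, c₁ ^ 2]) := by
  have h' : c₁ * conj c₁ = 1 := by rw [mul_conj', h]; simp
  ext i j
  fin_cases i <;> fin_cases j <;> simp [toeplitz3, vecMulVec] <;> grind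

theorem smul_toeplitz3_eq_sum_vecMulVec (c₁ c₂ : ℂ) :
    (1 - ‖c₁‖ ^ 2 : ℝ) • toeplitz3 c₁ c₂ =
      (1 - ‖c₁‖ ^ 2 : ℝ) • vecMulVec ![1, c₁, c₂] (star ![1, c₁, c₂]) +
      vecMulVec ![0, ((1 - ‖c₁‖ ^ 2 : ℝ) : ℂ), c₁ - star c₁ * c₂]
        (star ![0, ((1 - ‖c₁‖ ^ 2 : ℝ) : ℂ), c₁ - star c₁ * c₂]) +
      ((1 - ‖c₁‖ ^ 2) ^ 2 - ‖c₂ - c₁ ^ 2‖ ^ 2 : ℝ) • vecMulVec ![0, 0, 1] (star ![0, 0, 1]) := by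
  ext i j
  fin_cases i <;> fin_cases j <;> simp [toeplitz3, vecMulVec, real_smul, ← mul_conj'] <;> ring

theorem posSemidef_toeplitz3_of_norm_le {c₁ c₂ : ℂ} (h : ‖c₂ - c₁ ^ 2‖ ≤ 1 - ‖c₁‖ ^ 2) :
    (toeplitz3 c₁ c₂).PosSemidef := by
  obtain ht | ht := (norm_nonneg _).trans h |>.eq_or_lt
  · have hc₁ : ‖c₁‖ = 1 :=
      (pow_eq_one_iff_of_nonneg (norm_nonneg _) two_ne_zero).mp (by linarith)
    have hc₂ : c₂ = c₁ ^ 2 := sub_eq_zero.mp (norm_le_zero_iff.mp (ht ▸ h))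
    rw [hc₂, toeplitz3_eq_vecMulVec_of_norm_eq_one hc₁]
    exact posSemidef_vecMulVec_self_star _
  · have hdet : 0 ≤ (1 - ‖c₁‖ ^ 2) ^ 2 - ‖c₂ - c₁ ^ 2‖ ^ 2 := by
      nlinarith [norm_nonneg (c₂ - c₁ ^ 2)]
    have hsmul : ((1 - ‖c₁‖ ^ 2 : ℝ) • toeplitz3 c₁ c₂).PosSemidef := by
      rw [smul_toeplitz3_eq_sum_vecMulVec]
      exact (((posSemidef_vecMulVec_self_star _).smul ht.le).add
        (posSemidef_vecMulVec_self_star _)).add ((posSemidef_vecMulVec_self_star _).smul hdet)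
    simpa [inv_smul_smul₀ ht.ne'] using hsmul.smul (inv_nonneg.mpr ht.le)

theorem norm_le_of_posSemidef_toeplitz3 {c₁ c₂ : ℂ} (h : (toeplitz3 c₁ c₂).PosSemidef) :
    ‖c₂ - c₁ ^ 2‖ ≤ 1 - ‖c₁‖ ^ 2 := by
  have ht : 0 ≤ 1 - ‖c₁‖ ^ 2 := by
    simpa only [det_toeplitz3_submatrix, zero_le_real] using (h.submatrix ![0, 1]).det_nonneg
  have hdet : ‖c₂ - c₁ ^ 2‖ ^ 2 ≤ (1 - ‖c₁‖ ^ 2) ^ 2 := by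
    simpa only [det_toeplitz3, zero_le_real, sub_nonneg] using h.det_nonneg
  exact (pow_le_pow_iff_left₀ (norm_nonneg _) ht two_ne_zero).mp hdet

theorem posSemidef_toeplitz3_iff (c₁ c₂ : ℂ) :
    (toeplitz3 c₁ c₂).PosSemidef ↔ ‖c₂ - c₁ ^ 2‖ ≤ 1 - ‖c₁‖ ^ 2 :=
  ⟨norm_le_of_posSemidef_toeplitz3, posSemidef_toeplitz3_of_norm_le⟩

/-- With `c₁ = a₁` and `c₂ = a₂ + a₁²`, the condition `|a₁|² + |a₂| ≤ 1` holds iff the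
Hermitian Toeplitz matrix `[[1, c̄₁, c̄₂], [c₁, 1, c̄₁], [c₂, c₁, 1]]` is positive
semidefinite. -/
theorem stmt4 (a₁ a₂ : ℂ) (c₁ c₂ : ℂ) (hc₁ : c₁ = a₁) (hc₂ : c₂ = a₂ + a₁ ^ 2) :
    ‖a₁‖ ^ 2 + ‖a₂‖ ≤ 1 ↔
      (!![1, star c₁, star c₂; c₁, 1, star c₁; c₂, c₁, 1] :
        Matrix (Fin 3) (Fin 3) ℂ).PosSemidef := by
  subst hc₁ hc₂
  rw [← toeplitz3, posSemidef_toeplitz3_iff, add_sub_cancel_right, le_sub_iff_add_le']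
end

section
/- If f : 𝔻ⁿ → ℂ is holomorphic with sup norm at most 1 and f(0) = 0, and a ∈ 𝔻ⁿ satisfies |aᵢ| < r for all i for some 0 < r < 1, then ‖Df(a)‖₁ = Σᵢ |∂f/∂zᵢ(a)| ≤ 1/(1 − r²). More precisely, for any a ∈ 𝔻ⁿ, ‖Df(a)‖₁ ≤ (1 − |f(a)|²)·maxᵢ 1/(1 − |aᵢ|²). -/
/-!
Precompose `f` with the holomorphic disc `w ↦ (moebius (a i) (e i * w))ᵢ` through `a`, where the
unimodular `e i` rotate each partial derivative `∂ᵢf(a)` onto the positive real axis. The result is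
a holomorphic map of the unit disc into the closed unit disc, with value `f a` at `0` and derivative
`∑ᵢ |∂ᵢf(a)| (1 - |aᵢ|²)` there, so the Schwarz–Pick lemma at the origin bounds this sum by
`1 - |f a|²`. Bounding each `1 / (1 - |aᵢ|²)` by its maximum then gives the estimate.
-/

open Metric Set Complex Filter Topology ComplexConjugate

noncomputable def moebius (c w : ℂ) : ℂ := (w + c) / (1 + conj c * w)

lemma sq_norm_one_add_conj_mul_sub_sq_norm_add (c w : ℂ) :
    ‖1 + conj c * w‖ ^ 2 - ‖w + c‖ ^ 2 = (1 - ‖c‖ ^ 2) * (1 - ‖w‖ ^ 2) := by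
  simp only [← normSq_eq_norm_sq, normSq_apply, add_re, add_im, mul_re, mul_im, conj_re, conj_im,
    one_re, one_im]
  ring

lemma one_add_conj_mul_ne_zero {c w : ℂ} (hc : ‖c‖ < 1) (hw : ‖w‖ ≤ 1) : 1 + conj c * w ≠ 0 := by
  intro h
  have hlt : ‖conj c * w‖ < 1 := by
    rw [norm_mul, RCLike.norm_conj]
    nlinarith [norm_nonneg c, norm_nonneg w]
  rw [eq_neg_of_add_eq_zero_right h, norm_neg, norm_one] at hlt
  exact hlt.false

lemma norm_moebius_lt_one {c w : ℂ} (hc : ‖c‖ < 1) (hw : ‖w‖ < 1) : ‖moebius c w‖ < 1 := by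
  rw [moebius, norm_div, div_lt_one (norm_pos_iff.2 (one_add_conj_mul_ne_zero hc hw.le))]
  refine lt_of_pow_lt_pow_left₀ 2 (norm_nonneg _) ?_
  have hgap : 0 < (1 - ‖c‖ ^ 2) * (1 - ‖w‖ ^ 2) := by
    apply mul_pos <;> nlinarith [norm_nonneg c, norm_nonneg w]
  linarith [sq_norm_one_add_conj_mul_sub_sq_norm_add c w]

lemma mapsTo_moebius {c : ℂ} (hc : ‖c‖ < 1) : MapsTo (moebius c) (ball 0 1) (ball 0 1) := by
  intro w hw
  rw [mem_ball_zero_iff] at hw ⊢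
  exact norm_moebius_lt_one hc hw

lemma moebius_zero (c : ℂ) : moebius c 0 = c := by simp [moebius]

lemma moebius_neg_self (c : ℂ) : moebius (-c) c = 0 := by simp [moebius]

lemma hasDerivAt_moebius {c w : ℂ} (hw : 1 + conj c * w ≠ 0) :
    HasDerivAt (moebius c) ((1 - ‖c‖ ^ 2 : ℝ) / (1 + conj c * w) ^ 2) w := by
  refine (((hasDerivAt_id' w).add_const c).div
    (((hasDerivAt_id' w).const_mul (conj c)).const_add 1) hw).congr_deriv ?_
  push_cast
  rw [← mul_conj']
  ring

lemma differentiableOn_moebius {c : ℂ} (hc : ‖c‖ < 1) :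
    DifferentiableOn ℂ (moebius c) (ball 0 1) := fun _w hw =>
  (hasDerivAt_moebius (one_add_conj_mul_ne_zero hc (mem_ball_zero_iff.1 hw).le))
    |>.differentiableAt.differentiableWithinAt

lemma norm_deriv_le_one_sub_sq_norm_of_mapsTo_ball {g : ℂ → ℂ}
    (hg : DifferentiableOn ℂ g (ball 0 1)) (hmaps : MapsTo g (ball 0 1) (ball 0 1)) :
    ‖deriv g 0‖ ≤ 1 - ‖g 0‖ ^ 2 := by
  -- The disc automorphism `moebius (-b)` moves `b = g 0` to `0`, where the Schwarz lemma applies.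
  set b := g 0
  have hb : ‖b‖ < 1 := mem_ball_zero_iff.1 (hmaps (mem_ball_self one_pos))
  have hb' : ‖-b‖ < 1 := by rwa [norm_neg]
  have hsq : 0 < 1 - ‖b‖ ^ 2 := by nlinarith [norm_nonneg b]
  have hden : 1 + conj (-b) * b = ((1 - ‖b‖ ^ 2 : ℝ) : ℂ) := by
    rw [map_neg, neg_mul, conj_mul']
    push_cast
    ring
  have hderiv : HasDerivAt (moebius (-b) ∘ g) (deriv g 0 / ((1 - ‖b‖ ^ 2 : ℝ) : ℂ)) 0 := by
    have hg0 := (hg.differentiableAt (ball_mem_nhds 0 one_pos)).hasDerivAt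
    refine ((hasDerivAt_moebius (one_add_conj_mul_ne_zero hb' hb.le)).comp 0 hg0).congr_deriv ?_
    rw [hden, norm_neg]
    have : ((1 - ‖b‖ ^ 2 : ℝ) : ℂ) ≠ 0 := by exact_mod_cast hsq.ne'
    field_simp
  have hschwarz : ‖deriv (moebius (-b) ∘ g) 0‖ ≤ 1 := by
    refine Complex.norm_deriv_le_one_of_mapsTo_ball
      ((differentiableOn_moebius hb').comp hg hmaps) ?_ one_pos
    rw [Function.comp_apply, moebius_neg_self]
    exact ((mapsTo_moebius hb').comp hmaps).mono_right ball_subset_closedBall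
  rw [hderiv.deriv, norm_div, norm_real, Real.norm_of_nonneg hsq.le, div_le_one hsq] at hschwarz
  exact hschwarz

lemma norm_deriv_le_one_sub_sq_norm_of_norm_le_one {g : ℂ → ℂ}
    (hg : DifferentiableOn ℂ g (ball 0 1)) (hbd : ∀ z ∈ ball (0 : ℂ) 1, ‖g z‖ ≤ 1) :
    ‖deriv g 0‖ ≤ 1 - ‖g 0‖ ^ 2 := by
  -- `t • g` maps into the open disc for `t < 1`; then let `t → 1`.
  have hscaled : ∀ t ∈ Ioo (0 : ℝ) 1, t * ‖deriv g 0‖ ≤ 1 - t ^ 2 * ‖g 0‖ ^ 2 := by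
    rintro t ⟨ht0, ht1⟩
    have hmaps : MapsTo (fun z => (t : ℂ) * g z) (ball 0 1) (ball 0 1) := fun z hz => by
      rw [mem_ball_zero_iff, norm_mul, norm_real, Real.norm_of_nonneg ht0.le]
      nlinarith [hbd z hz]
    have h := norm_deriv_le_one_sub_sq_norm_of_mapsTo_ball (hg.const_mul _) hmaps
    rwa [deriv_const_mul _ (hg.differentiableAt (ball_mem_nhds 0 one_pos)), norm_mul, norm_mul,
      norm_real, Real.norm_of_nonneg ht0.le, mul_pow] at h
  have hlim : ∀ φ : ℝ → ℝ, Continuous φ → Tendsto φ (𝓝[<] 1) (𝓝 (φ 1)) := fun φ hφ =>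
    hφ.continuousAt.tendsto.mono_left nhdsWithin_le_nhds
  have := le_of_tendsto_of_tendsto (hlim (fun t => t * ‖deriv g 0‖) (by fun_prop))
    (hlim (fun t => 1 - t ^ 2 * ‖g 0‖ ^ 2) (by fun_prop))
    (Filter.mem_of_superset (Ioo_mem_nhdsLT one_pos) hscaled)
  simpa using this

lemma isOpen_setOf_forall_norm_lt_one {ι E : Type*} [Finite ι] [SeminormedAddCommGroup E] :
    IsOpen {z : ι → E | ∀ i, ‖z i‖ < 1} := by
  simp_rw [ofPred_forall]
  exact isOpen_iInter_of_finite fun i => isOpen_lt (continuous_apply i).norm continuous_const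

section Polydisc

variable {ι : Type*} [Fintype ι] {f : (ι → ℂ) → ℂ} {a : ι → ℂ}

lemma norm_fderiv_apply_le_of_polydisc (hf : DifferentiableOn ℂ f {z | ∀ i, ‖z i‖ < 1})
    (hbd : ∀ z : ι → ℂ, (∀ i, ‖z i‖ < 1) → ‖f z‖ ≤ 1) (ha : ∀ i, ‖a i‖ < 1) {e : ι → ℂ}
    (he : ∀ i, ‖e i‖ ≤ 1) :
    ‖fderiv ℂ f a (fun i => e i * (1 - ‖a i‖ ^ 2 : ℝ))‖ ≤ 1 - ‖f a‖ ^ 2 := by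
  set φ : ℂ → ι → ℂ := fun w i => moebius (a i) (e i * w)
  have hmul_mem : ∀ i, MapsTo (e i * ·) (ball (0 : ℂ) 1) (ball 0 1) := fun i w hw => by
    rw [mem_ball_zero_iff] at hw ⊢
    rw [norm_mul]
    nlinarith [he i, norm_nonneg w, norm_nonneg (e i)]
  have hφ_maps : MapsTo φ (ball 0 1) {z | ∀ i, ‖z i‖ < 1} := fun w hw i =>
    mem_ball_zero_iff.1 (mapsTo_moebius (ha i) (hmul_mem i hw))
  have hφ_diff : DifferentiableOn ℂ φ (ball 0 1) := differentiableOn_pi.2 fun i =>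
    (differentiableOn_moebius (ha i)).comp ((differentiable_id.const_mul _).differentiableOn)
      (hmul_mem i)
  have hφ0 : φ 0 = a := funext fun i => by simp [φ, moebius_zero]
  have hφ' : HasDerivAt φ (fun i => e i * (1 - ‖a i‖ ^ 2 : ℝ)) 0 := hasDerivAt_pi.2 fun i => by
    refine ((hasDerivAt_moebius (c := a i) (w := e i * 0) (by simp)).comp 0
      ((hasDerivAt_id' 0).const_mul (e i))).congr_deriv ?_
    simp [mul_comm]
  have hfa : HasFDerivAt f (fderiv ℂ f a) (φ 0) := by
    rw [hφ0]
    exact (hf.differentiableAt (isOpen_setOf_forall_norm_lt_one.mem_nhds ha)).hasFDerivAt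
  have h := norm_deriv_le_one_sub_sq_norm_of_norm_le_one (hf.comp hφ_diff hφ_maps)
    (fun w hw => hbd _ (hφ_maps hw))
  rwa [(hfa.comp_hasDerivAt 0 hφ').deriv, Function.comp_apply, hφ0] at h

lemma sum_norm_fderiv_single_mul_le [DecidableEq ι]
    (hf : DifferentiableOn ℂ f {z | ∀ i, ‖z i‖ < 1})
    (hbd : ∀ z : ι → ℂ, (∀ i, ‖z i‖ < 1) → ‖f z‖ ≤ 1) (ha : ∀ i, ‖a i‖ < 1) :
    ∑ i, ‖fderiv ℂ f a (Pi.single i 1)‖ * (1 - ‖a i‖ ^ 2) ≤ 1 - ‖f a‖ ^ 2 := by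
  set c : ι → ℂ := fun i => fderiv ℂ f a (Pi.single i 1)
  set e : ι → ℂ := fun i => exp (-(arg (c i) : ℂ) * I)
  have hc : ∀ i, e i * c i = ‖c i‖ := fun i => by
    conv_lhs => rw [← norm_mul_exp_arg_mul_I (c i)]
    rw [mul_left_comm, ← exp_add]
    simp
  have hlin : fderiv ℂ f a (fun i => e i * (1 - ‖a i‖ ^ 2 : ℝ)) =
      ((∑ i, ‖c i‖ * (1 - ‖a i‖ ^ 2) : ℝ) : ℂ) := by
    conv_lhs => rw [← Finset.univ_sum_single (fun i => e i * (1 - ‖a i‖ ^ 2 : ℝ))]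
    simp only [map_sum]
    push_cast
    refine Finset.sum_congr rfl fun i _ => ?_
    rw [← mul_one (_ * _), ← smul_eq_mul, Pi.single_smul, map_smul, smul_eq_mul]
    linear_combination (1 - (‖a i‖ : ℂ) ^ 2) * hc i
  have hnonneg : 0 ≤ ∑ i, ‖c i‖ * (1 - ‖a i‖ ^ 2) := Finset.sum_nonneg fun i _ =>
    mul_nonneg (norm_nonneg _) (by nlinarith [ha i, norm_nonneg (a i)])
  have h := norm_fderiv_apply_le_of_polydisc hf hbd ha (e := e) fun i => by simp [e, norm_exp]
  rwa [hlin, norm_real, Real.norm_of_nonneg hnonneg] at h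

end Polydisc

lemma sum_le_mul_sup'_one_div {ι : Type*} {s : Finset ι} (hs : s.Nonempty) {x w : ι → ℝ} {B : ℝ}
    (hx : ∀ i ∈ s, 0 ≤ x i) (hw : ∀ i ∈ s, 0 < w i) (h : ∑ i ∈ s, x i * w i ≤ B) :
    ∑ i ∈ s, x i ≤ B * s.sup' hs (fun i => 1 / w i) := by
  set M := s.sup' hs (fun i => 1 / w i)
  have hM : ∀ i ∈ s, 1 / w i ≤ M := fun i hi => s.le_sup' (fun i => 1 / w i) hi
  have hM0 : 0 ≤ M := by
    obtain ⟨i, hi⟩ := hs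
    exact (one_div_pos.2 (hw i hi)).le.trans (hM i hi)
  calc ∑ i ∈ s, x i = ∑ i ∈ s, x i * w i * (1 / w i) :=
        Finset.sum_congr rfl fun i hi => by field_simp [(hw i hi).ne']
    _ ≤ ∑ i ∈ s, x i * w i * M := Finset.sum_le_sum fun i hi =>
        mul_le_mul_of_nonneg_left (hM i hi) (mul_nonneg (hx i hi) (hw i hi).le)
    _ = (∑ i ∈ s, x i * w i) * M := (Finset.sum_mul ..).symm
    _ ≤ B * M := mul_le_mul_of_nonneg_right h hM0

theorem stmt7_general (n : ℕ) (hn : 0 < n) (f : (Fin n → ℂ) → ℂ)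
    (hf : DifferentiableOn ℂ f {z | ∀ i, ‖z i‖ < 1})
    (hbd : ∀ z : Fin n → ℂ, (∀ i, ‖z i‖ < 1) → ‖f z‖ ≤ 1)
    (a : Fin n → ℂ) (ha : ∀ i, ‖a i‖ < 1) :
    (∑ i, ‖fderiv ℂ f a (Pi.single i 1)‖) ≤
        (1 - ‖f a‖ ^ 2) *
          Finset.univ.sup' (Finset.univ_nonempty_iff.mpr ⟨⟨0, hn⟩⟩)
            (fun i => 1 / (1 - ‖a i‖ ^ 2)) ∧
      ∀ r : ℝ, 0 < r → r < 1 → (∀ i, ‖a i‖ < r) →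
        (∑ i, ‖fderiv ℂ f a (Pi.single i 1)‖) ≤ 1 / (1 - r ^ 2) := by
  have hpos : ∀ i ∈ Finset.univ, 0 < 1 - ‖a i‖ ^ 2 := fun i _ => by
    nlinarith [ha i, norm_nonneg (a i)]
  have hkey : ∑ i, ‖fderiv ℂ f a (Pi.single i 1)‖ * (1 - ‖a i‖ ^ 2) ≤ 1 - ‖f a‖ ^ 2 :=
    sum_norm_fderiv_single_mul_le hf hbd ha
  have hweighted := fun B => sum_le_mul_sup'_one_div (B := B)
    (Finset.univ_nonempty_iff.mpr ⟨⟨0, hn⟩⟩) (x := fun i => ‖fderiv ℂ f a (Pi.single i 1)‖)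
    (fun i _ => norm_nonneg _) hpos
  refine ⟨hweighted _ hkey, fun r _ hr1 har => ?_⟩
  calc ∑ i, ‖fderiv ℂ f a (Pi.single i 1)‖
      ≤ 1 * Finset.univ.sup' _ (fun i => 1 / (1 - ‖a i‖ ^ 2)) :=
        hweighted 1 (hkey.trans (by linarith [sq_nonneg ‖f a‖]))
    _ ≤ 1 / (1 - r ^ 2) := by
        rw [one_mul]
        refine Finset.sup'_le _ _ fun i hi => one_div_le_one_div_of_le (by nlinarith) ?_
        nlinarith [har i, norm_nonneg (a i)]

/-- Gradient estimate on the polydisc: if `f : 𝔻ⁿ → ℂ` is holomorphic with `|f| ≤ 1` and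
`f(0) = 0`, then `‖Df(a)‖₁ ≤ (1 − |f(a)|²)·maxᵢ 1/(1 − |aᵢ|²)`, and in particular
`‖Df(a)‖₁ ≤ 1/(1 − r²)` whenever `|aᵢ| < r < 1` for all `i`. -/
theorem stmt7 (n : ℕ) (hn : 0 < n) (f : (Fin n → ℂ) → ℂ)
    (hf : DifferentiableOn ℂ f {z | ∀ i, ‖z i‖ < 1})
    (hbd : ∀ z : Fin n → ℂ, (∀ i, ‖z i‖ < 1) → ‖f z‖ ≤ 1)
    (hf0 : f 0 = 0)
    (a : Fin n → ℂ) (ha : ∀ i, ‖a i‖ < 1) :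
    (∑ i, ‖fderiv ℂ f a (Pi.single i 1)‖) ≤
        (1 - ‖f a‖ ^ 2) *
          Finset.univ.sup' (Finset.univ_nonempty_iff.mpr ⟨⟨0, hn⟩⟩)
            (fun i => 1 / (1 - ‖a i‖ ^ 2)) ∧
      ∀ r : ℝ, 0 < r → r < 1 → (∀ i, ‖a i‖ < r) →
        (∑ i, ‖fderiv ℂ f a (Pi.single i 1)‖) ≤ 1 / (1 - r ^ 2) :=
  stmt7_general n hn f hf hbd a ha
end

section
/- Let A_V be the 3×3 real symmetric matrix with 1 on the diagonal and −1 off the diagonal. Then the norm of A_V as an operator from ℓ^∞(3) to ℓ¹(3) is at least 6, i.e., sup over |z₁|=|z₂|=|z₃|=1 of |Σᵢⱼ (A_V)ᵢⱼ zᵢ z̄ⱼ| = 6. -/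
/-!
Writing the coefficient `1` on the diagonal and `-1` off it as `2 δᵢⱼ - 1`, the form becomes
`2 Σ |zᵢ|² - |Σ zᵢ|²`, which for unimodular `zᵢ` is the real number `2n - |z₁ + ⋯ + zₙ|²`.
Since `0 ≤ |Σ zᵢ| ≤ n`, it lies in `[2n - n², 2n]`, so its modulus is at most `2n` once `n ≤ 4`;
the `n`-th roots of unity sum to zero and attain `2n`.
-/

open Finset

section VaropoulosKaijserForm

variable {ι : Type*} [Fintype ι] [DecidableEq ι]

theorem sum_sum_ite_one_neg_one_mul_mul_star (z : ι → ℂ) :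
    ∑ i, ∑ j, (if i = j then (1 : ℂ) else -1) * z i * star (z j)
      = 2 * ∑ i, (‖z i‖ : ℂ) ^ 2 - (‖∑ i, z i‖ : ℂ) ^ 2 := by
  have hsq : (‖∑ i, z i‖ : ℂ) ^ 2 = ∑ i, ∑ j, z i * star (z j) := by
    rw [← Complex.mul_conj', ← Complex.star_def, star_sum, sum_mul_sum]
  calc ∑ i, ∑ j, (if i = j then (1 : ℂ) else -1) * z i * star (z j)
      = ∑ i, ∑ j, (2 * (if i = j then z i * star (z j) else 0) - z i * star (z j)) := by
        refine sum_congr rfl fun i _ => sum_congr rfl fun j _ => ?_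
        split_ifs <;> ring
    _ = 2 * ∑ i, z i * star (z i) - ∑ i, ∑ j, z i * star (z j) := by
        simp only [sum_sub_distrib, ← mul_sum, sum_ite_eq, mem_univ, if_true]
    _ = 2 * ∑ i, (‖z i‖ : ℂ) ^ 2 - (‖∑ i, z i‖ : ℂ) ^ 2 := by
        simp only [hsq, Complex.star_def, Complex.mul_conj']

theorem sum_sum_ite_one_neg_one_mul_mul_star_of_norm_eq_one {z : ι → ℂ}
    (hz : ∀ i, ‖z i‖ = 1) :
    ∑ i, ∑ j, (if i = j then (1 : ℂ) else -1) * z i * star (z j)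
      = ((2 * Fintype.card ι - ‖∑ i, z i‖ ^ 2 : ℝ) : ℂ) := by
  rw [sum_sum_ite_one_neg_one_mul_mul_star]
  simp [hz]

theorem norm_sum_sum_ite_one_neg_one_mul_mul_star_le (hι : Fintype.card ι ≤ 4) {z : ι → ℂ}
    (hz : ∀ i, ‖z i‖ = 1) :
    ‖∑ i, ∑ j, (if i = j then (1 : ℂ) else -1) * z i * star (z j)‖ ≤ 2 * Fintype.card ι := by
  set n : ℝ := (Fintype.card ι : ℝ)
  have hn : n ≤ 4 := by simp only [n]; exact_mod_cast hι
  have hsum : ‖∑ i, z i‖ ≤ n := by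
    calc ‖∑ i, z i‖ ≤ ∑ i, ‖z i‖ := norm_sum_le _ _
      _ = n := by simp [hz, n]
  have hsum_nonneg := norm_nonneg (∑ i, z i)
  rw [sum_sum_ite_one_neg_one_mul_mul_star_of_norm_eq_one hz, Complex.norm_real,
    Real.norm_eq_abs, abs_le]
  constructor <;> nlinarith

theorem exists_norm_eq_one_sum_sum_ite_one_neg_one_mul_mul_star_eq {n : ℕ} (hn : 1 < n) :
    ∃ z : Fin n → ℂ, (∀ i, ‖z i‖ = 1) ∧
      ∑ i, ∑ j, (if i = j then (1 : ℂ) else -1) * z i * star (z j) = 2 * n := by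
  have hn0 : n ≠ 0 := by omega
  have hζ := Complex.isPrimitiveRoot_exp n hn0
  set ζ := Complex.exp (2 * Real.pi * Complex.I / n)
  have hunit : ∀ i : Fin n, ‖ζ ^ (i : ℕ)‖ = 1 := fun i => by
    rw [norm_pow, hζ.norm'_eq_one hn0, one_pow]
  refine ⟨fun i => ζ ^ (i : ℕ), hunit, ?_⟩
  rw [sum_sum_ite_one_neg_one_mul_mul_star_of_norm_eq_one hunit,
    Fin.sum_univ_eq_sum_range (fun i => ζ ^ i), hζ.geom_sum_eq_zero hn]
  simp

end VaropoulosKaijserForm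

/-- The Varopoulos–Kaijser coefficient matrix `A_V = [[1,−1,−1],[−1,1,−1],[−1,−1,1]]` has
`sup_{|zᵢ|=1} |Σᵢⱼ (A_V)ᵢⱼ zᵢ z̄ⱼ| = 6`; in particular its `ℓ^∞(3) → ℓ¹(3)` norm is ≥ 6. -/
theorem stmt8 :
    (∀ z : Fin 3 → ℂ, (∀ i, ‖z i‖ = 1) →
        ‖∑ i, ∑ j, (if i = j then (1 : ℂ) else -1) * z i * star (z j)‖ ≤ 6) ∧
      ∃ z : Fin 3 → ℂ, (∀ i, ‖z i‖ = 1) ∧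
        ‖∑ i, ∑ j, (if i = j then (1 : ℂ) else -1) * z i * star (z j)‖ = 6 := by
  constructor
  · intro z hz
    convert norm_sum_sum_ite_one_neg_one_mul_mul_star_le (by simp) hz
    norm_num
  · obtain ⟨z, hz, hval⟩ :=
      exists_norm_eq_one_sum_sum_ite_one_neg_one_mul_mul_star_eq (n := 3) (by norm_num)
    refine ⟨z, hz, ?_⟩
    rw [hval]
    norm_num
end

section
/- The supremum norm of the Varopoulos–Kaijser polynomial p_V(z₁,z₂,z₃) = z₁² + z₂² + z₃² − 2z₁z₂ − 2z₂z₃ − 2z₃z₁ over the closed unit polydisc 𝔻̄³ equals 5. -/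
/-!
On the torus `|z₀| = |z₁| = |z₂| = 1`, write `z₀ + z₁ = 2 s u` with `u² = z₀ z₁` and `s ∈ [-1, 1]`.
Then `p_V = (z₀ + z₁ - z₂)² - 4 z₀ z₁ = (2 (s - 1) u - z₂) (2 (s + 1) u - z₂)`, and with
`r = Re (u z̄₂)` its squared modulus is `25 - 8 (s (s + r) + 2 (1 - s²) (r - s)²) ≤ 25`.
The maximum modulus principle, applied in one variable at a time, extends the bound from the torus
to the closed polydisc, and `p_V (1, 1, -1) = 5`.
-/

/-- The Varopoulos–Kaijser polynomial. -/
noncomputable def pV (z : Fin 3 → ℂ) : ℂ :=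
  z 0 ^ 2 + z 1 ^ 2 + z 2 ^ 2 - 2 * z 0 * z 1 - 2 * z 1 * z 2 - 2 * z 2 * z 0

open ComplexConjugate

namespace Complex

variable {F : Type*} [NormedAddCommGroup F] [NormedSpace ℂ F]

theorem norm_le_of_forall_norm_eq_one_norm_le {g : ℂ → F} (hg : Differentiable ℂ g) {C : ℝ}
    (hC : ∀ w : ℂ, ‖w‖ = 1 → ‖g w‖ ≤ C) {z : ℂ} (hz : ‖z‖ ≤ 1) : ‖g z‖ ≤ C := by
  refine norm_le_of_forall_mem_frontier_norm_le Metric.isBounded_ball hg.diffContOnCl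
    (fun w hw => hC w ?_) (by rwa [closure_ball _ one_ne_zero, Metric.mem_closedBall,
      dist_zero_right])
  simpa [frontier_ball] using hw

theorem norm_le_on_closedPolydisc_of_norm_le_on_torus {ι : Type*} [Fintype ι]
    {f : (ι → ℂ) → F} (hf : Differentiable ℂ f) {C : ℝ}
    (hC : ∀ z : ι → ℂ, (∀ i, ‖z i‖ = 1) → ‖f z‖ ≤ C) {z : ι → ℂ} (hz : ∀ i, ‖z i‖ ≤ 1) :
    ‖f z‖ ≤ C := by
  classical
  suffices h : ∀ s : Finset ι, ∀ z : ι → ℂ, (∀ i, ‖z i‖ ≤ 1) → (∀ i ∉ s, ‖z i‖ = 1) →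
      ‖f z‖ ≤ C from h Finset.univ z hz (by simp)
  intro s
  induction s using Finset.induction_on with
  | empty => exact fun z _ hz => hC z (by simpa using hz)
  | insert j s _ ih =>
    intro z hz hzs
    have hupdate : Differentiable ℂ (fun w => f (Function.update z j w)) :=
      hf.comp fun w => (hasFDerivAt_update z w).differentiableAt
    refine Function.update_eq_self j z ▸ norm_le_of_forall_norm_eq_one_norm_le hupdate
      (fun w hw => ih _ (fun i => ?_) (fun i hi => ?_)) (hz j)
    · rcases eq_or_ne i j with rfl | h <;> simp [*]
    · rcases eq_or_ne i j with rfl | h <;> simp_all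

theorem exists_sq_eq_mul_and_add_eq {a b : ℂ} (ha : ‖a‖ = 1) (hb : ‖b‖ = 1) :
    ∃ u : ℂ, ∃ s : ℝ, ‖u‖ = 1 ∧ |s| ≤ 1 ∧ u ^ 2 = a * b ∧ a + b = 2 * s * u := by
  obtain ⟨u, hu⟩ := IsAlgClosed.exists_pow_nat_eq (a * b) two_pos
  have hu1 : ‖u‖ = 1 := by
    rw [← pow_left_inj₀ (norm_nonneg u) zero_le_one two_ne_zero, ← norm_pow, hu, norm_mul, ha, hb]
    norm_num
  have hconj {x : ℂ} (hx : ‖x‖ = 1) : x * conj x = 1 := by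
    rw [mul_conj, normSq_eq_norm_sq, hx]; norm_num
  -- `v := a / u` lies on the circle and `b / u = u / a = conj v`
  set v := a * conj u with hv
  have hre : (2 * v.re : ℂ) = v + conj v := by rw [add_conj]; push_cast; ring
  have hconj_v : conj v = conj a * u := by simp [hv]
  refine ⟨u, v.re, hu1, ?_, hu, ?_⟩
  · simpa [hv, hu1, ha] using abs_re_le_norm v
  · linear_combination (-u) * hre - u * hconj_v - u * hv - a * hconj hu1 - conj a * hu
      - b * hconj ha

theorem norm_ofReal_mul_sub_sq {u c : ℂ} (hu : ‖u‖ = 1) (hc : ‖c‖ = 1) (t : ℝ) :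
    ‖t * u - c‖ ^ 2 = t ^ 2 - 2 * t * (u * conj c).re + 1 := by
  rw [← normSq_eq_norm_sq, normSq_sub, normSq_mul, normSq_ofReal, normSq_eq_norm_sq u,
    normSq_eq_norm_sq c, hu, hc, mul_assoc (t : ℂ), re_ofReal_mul]
  ring

end Complex

open Complex

theorem norm_pV_factors_mul_le_five {u c : ℂ} (hu : ‖u‖ = 1) (hc : ‖c‖ = 1) {s : ℝ}
    (hs : |s| ≤ 1) : ‖(2 * (s - 1) * u - c) * (2 * (s + 1) * u - c)‖ ≤ 5 := by
  have hr : |(u * conj c).re| ≤ 1 := (abs_re_le_norm _).trans_eq (by simp [hu, hc])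
  have hminus := norm_ofReal_mul_sub_sq hu hc (2 * (s - 1))
  have hplus := norm_ofReal_mul_sub_sq hu hc (2 * (s + 1))
  push_cast at hminus hplus
  rw [← sq_le_sq₀ (norm_nonneg _) (by norm_num), norm_mul, mul_pow, hminus, hplus]
  generalize (u * conj c).re = r at hr
  rw [← sq_le_one_iff_abs_le_one] at hs hr
  have hdefect : 0 ≤ s * (s + r) + 2 * (1 - s ^ 2) * (r - s) ^ 2 := by
    nlinarith [mul_nonneg (sub_nonneg.2 hs) (sub_nonneg.2 hr),
      mul_nonneg (sub_nonneg.2 hs) (sq_nonneg (r - s))]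
  linear_combination 8 * hdefect

theorem norm_pV_le_five_of_norm_eq_one {z : Fin 3 → ℂ} (hz : ∀ i, ‖z i‖ = 1) :
    ‖pV z‖ ≤ 5 := by
  obtain ⟨u, s, hu, hs, hu_sq, hsum⟩ := exists_sq_eq_mul_and_add_eq (hz 0) (hz 1)
  have hfactor : pV z = (2 * (s - 1) * u - z 2) * (2 * (s + 1) * u - z 2) := by
    unfold pV
    linear_combination (z 0 + z 1 + 2 * s * u - 2 * z 2) * hsum + 4 * hu_sq
  exact hfactor ▸ norm_pV_factors_mul_le_five hu (hz 2) hs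

/-- The supremum norm of the Varopoulos–Kaijser polynomial over the closed unit
polydisc equals `5`. -/
theorem stmt9 :
    IsGreatest {x : ℝ | ∃ z : Fin 3 → ℂ, (∀ i, ‖z i‖ ≤ 1) ∧ x = ‖pV z‖} 5 := by
  refine ⟨⟨![1, 1, -1], fun i => by fin_cases i <;> simp, ?_⟩, ?_⟩
  · norm_num [pV, Matrix.cons_val_two]
  · rintro x ⟨z, hz, rfl⟩
    exact norm_le_on_closedPolydisc_of_norm_le_on_torus (by unfold pV; fun_prop)
      (fun _ => norm_pV_le_five_of_norm_eq_one) hz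
end

section
/- Let T₁, …, Tₙ be the commuting 3×3 matrices Tⱼ = [[0, αⱼ, 0], [0, 0, βⱼ], [0, 0, 0]] satisfying αⱼβₖ = αₖβⱼ for all j, k, with |αⱼ|, |βⱼ| ≤ 1. Then for every polynomial p in n variables with sup norm at most 1 on the polydisc 𝔻ⁿ, ‖p(T₁, …, Tₙ)‖ ≤ 1. -/
/-- Evaluation of a polynomial in `n` variables on an `n`-tuple of (commuting) elements of a
possibly noncommutative `ℂ`-algebra. -/
noncomputable def opEval {n : ℕ} {R : Type*} [Ring R] [Algebra ℂ R]
    (T : Fin n → R) (p : MvPolynomial (Fin n) ℂ) : R :=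
  ∑ k ∈ p.support, p.coeff k • (List.ofFn fun i => T i ^ k i).prod

/-!
The commutation conditions say that `(αⱼ)` and `(βⱼ)` are proportional, so `Tⱼ = γⱼ • N` with
`|γⱼ| ≤ 1` for a single contraction `N = [[0, a, 0], [0, 0, b], [0, 0, 0]]`, and
`p(T₁, …, Tₙ) = q(N)` for the one-variable polynomial `q(z) = p(γ₁ z, …, γₙ z)`, which is bounded
by `1` on the disc. It remains to prove von Neumann's inequality `‖q(N)‖ ≤ 1` for this `N`.
For that we use Egerváry's finite unitary dilation: given defect operators `D`, `D'` of `N`,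
the operator
`U = [[N, 0, …, 0, D'], [D, 0, …, 0, -N*], [0, 1, 0, …, 0], …, [0, …, 0, 1, 0]]`
on `E^(d+2)`, `d = deg q`, is unitary and `Nᵏ` is the upper-left corner of `Uᵏ` for `k ≤ d + 1`, so
`q(N)` is a compression of `q(U)`, whose norm is at most `sup_{|z| = 1} |q(z)| ≤ 1` because `U`
is normal with spectrum on the unit circle.
-/

open Polynomial ComplexConjugate
open scoped InnerProductSpace

lemma norm_aeval_le_one_of_mem_unitary {A : Type*} [CStarAlgebra A] {u : A}
    (hu : u ∈ unitary A) {q : ℂ[X]} (hq : ∀ z : ℂ, ‖z‖ ≤ 1 → ‖q.eval z‖ ≤ 1) :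
    ‖aeval u q‖ ≤ 1 := by
  have := isStarNormal_of_mem_unitary hu
  rw [← cfc_polynomial q u]
  exact norm_cfc_le zero_le_one fun z hz => hq z (spectrum.norm_eq_one_of_unitary hu hz).le

lemma norm_aeval_le_one_of_dilation {E W : Type*} [NormedAddCommGroup E] [NormedSpace ℂ E]
    [NormedAddCommGroup W] [InnerProductSpace ℂ W] [CompleteSpace W]
    {N : E →L[ℂ] E} {U : W →L[ℂ] W} (hU : U ∈ unitary (W →L[ℂ] W))
    (ι : E → W) (hι : ∀ x, ‖ι x‖ ≤ ‖x‖) (π : W →L[ℂ] E) (hπ : ∀ w, ‖π w‖ ≤ ‖w‖)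
    {q : ℂ[X]} (hdil : ∀ k ≤ q.natDegree, ∀ x, π ((U ^ k) (ι x)) = (N ^ k) x)
    (hq : ∀ z : ℂ, ‖z‖ ≤ 1 → ‖q.eval z‖ ≤ 1) :
    ‖aeval N q‖ ≤ 1 := by
  refine (aeval N q).opNorm_le_bound zero_le_one fun x => ?_
  have hcompress : (aeval N q) x = π ((aeval U q) (ι x)) := by
    simp only [aeval_eq_sum_range, sum_apply, map_sum, smul_apply, map_smul]
    refine Finset.sum_congr rfl fun k hk => ?_
    rw [hdil k (Nat.lt_succ_iff.mp (Finset.mem_range.mp hk))]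
  calc ‖(aeval N q) x‖ = ‖π ((aeval U q) (ι x))‖ := by rw [hcompress]
    _ ≤ ‖(aeval U q) (ι x)‖ := hπ _
    _ ≤ ‖aeval U q‖ * ‖ι x‖ := (aeval U q).le_opNorm _
    _ ≤ 1 * ‖x‖ := by gcongr; exacts [norm_aeval_le_one_of_mem_unitary hU hq, hι x]

section Egervary

variable {E : Type*} [NormedAddCommGroup E] [InnerProductSpace ℂ E] [CompleteSpace E]
  {N D D' : E →L[ℂ] E} {d : ℕ}

noncomputable def egervaryDilation (N D D' : E →L[ℂ] E) (d : ℕ) :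
    (PiLp 2 fun _ : Fin (d + 2) => E) →ₗ[ℂ] PiLp 2 fun _ : Fin (d + 2) => E where
  toFun v := WithLp.toLp 2 <| Fin.cases (N (v 0) + D' (v (Fin.last _)))
    (Fin.cases (D (v 0) - star N (v (Fin.last _))) fun i => v i.succ.castSucc)
  map_add' v w := by
    ext k
    refine Fin.cases ?_ (Fin.cases ?_ fun i => ?_) k <;>
      simp only [PiLp.add_apply, Fin.cases_zero, Fin.cases_succ, map_add] <;> abel
  map_smul' c v := by
    ext k
    refine Fin.cases ?_ (Fin.cases ?_ fun i => ?_) k <;>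
      simp only [PiLp.smul_apply, Fin.cases_zero, Fin.cases_succ, map_smul, smul_add, smul_sub,
        RingHom.id_apply]

@[simp] lemma egervaryDilation_apply_zero (v : PiLp 2 fun _ : Fin (d + 2) => E) :
    egervaryDilation N D D' d v 0 = N (v 0) + D' (v (Fin.last _)) := rfl

@[simp] lemma egervaryDilation_apply_one (v : PiLp 2 fun _ : Fin (d + 2) => E) :
    egervaryDilation N D D' d v 1 = D (v 0) - star N (v (Fin.last _)) := rfl

@[simp] lemma egervaryDilation_apply_succ_succ (v : PiLp 2 fun _ : Fin (d + 2) => E)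
    (i : Fin d) : egervaryDilation N D D' d v i.succ.succ = v i.succ.castSucc := rfl

section Unitary

variable (hD : IsSelfAdjoint D) (hD' : IsSelfAdjoint D')
  (hN : star N * N + D * D = 1) (hN' : N * star N + D' * D' = 1) (hND : D' * N = N * D)
include hD hD' hN hN' hND

open ContinuousLinearMap in
lemma inner_halmos_block (x x' y y' : E) :
    ⟪N x + D' y, N x' + D' y'⟫_ℂ + ⟪D x - star N y, D x' - star N y'⟫_ℂ
      = ⟪x, x'⟫_ℂ + ⟪y, y'⟫_ℂ := by
  have sD : ∀ u v, ⟪D u, v⟫_ℂ = ⟪u, D v⟫_ℂ := hD.isSymmetric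
  have sD' : ∀ u v, ⟪D' u, v⟫_ℂ = ⟪u, D' v⟫_ℂ := hD'.isSymmetric
  have hx : ⟪N x, N x'⟫_ℂ + ⟪D x, D x'⟫_ℂ = ⟪x, x'⟫_ℂ := by
    rw [← adjoint_inner_right, ← star_eq_adjoint, sD x]
    simpa [inner_add_right] using congr(⟪x, $hN x'⟫_ℂ)
  have hy : ⟪D' y, D' y'⟫_ℂ + ⟪star N y, star N y'⟫_ℂ = ⟪y, y'⟫_ℂ := by
    rw [sD' y, star_eq_adjoint, adjoint_inner_left, ← star_eq_adjoint, add_comm]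
    simpa [inner_add_right] using congr(⟪y, $hN' y'⟫_ℂ)
  have hxy : ⟪N x, D' y'⟫_ℂ = ⟪D x, star N y'⟫_ℂ := by
    rw [← sD', star_eq_adjoint, adjoint_inner_right]
    simpa using congr(⟪$hND x, y'⟫_ℂ)
  have hyx : ⟪D' y, N x'⟫_ℂ = ⟪star N y, D x'⟫_ℂ := by
    rw [sD', star_eq_adjoint, adjoint_inner_left]
    simpa using congr(⟪y, $hND x'⟫_ℂ)
  simp only [inner_add_left, inner_add_right, inner_sub_left, inner_sub_right]
  linear_combination hx + hy + hxy + hyx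

lemma inner_egervaryDilation (v w : PiLp 2 fun _ : Fin (d + 2) => E) :
    ⟪egervaryDilation N D D' d v, egervaryDilation N D D' d w⟫_ℂ = ⟪v, w⟫_ℂ := by
  rw [PiLp.inner_apply, PiLp.inner_apply, Fin.sum_univ_succ, Fin.sum_univ_succ,
    Fin.sum_univ_castSucc (f := fun k => ⟪v k, w k⟫_ℂ), Fin.sum_univ_succ]
  simp only [Fin.succ_zero_eq_one, egervaryDilation_apply_zero, egervaryDilation_apply_one,
    egervaryDilation_apply_succ_succ, Fin.castSucc_zero]
  linear_combination
    inner_halmos_block hD hD' hN hN' hND (v 0) (w 0) (v (Fin.last _)) (w (Fin.last _))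

end Unitary

lemma egervaryDilation_pow_single_apply_of_lt (x : E) (k : ℕ) {j : Fin (d + 2)} (hj : k < j) :
    (egervaryDilation N D D' d ^ k) (PiLp.single 2 0 x) j = 0 := by
  induction k generalizing j with
  | zero => exact PiLp.single_eq_of_ne (β := fun _ => E) 2 (by rintro rfl; simp at hj) x
  | succ k ih =>
    obtain ⟨i, rfl⟩ : ∃ i : Fin d, j = i.succ.succ :=
      ⟨j.subNat 2 (by omega), by ext; simp; omega⟩
    rw [pow_succ', Module.End.mul_apply, egervaryDilation_apply_succ_succ]
    exact ih (by simp at hj ⊢; omega)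

lemma egervaryDilation_pow_single_apply_zero (x : E) {k : ℕ} (hk : k ≤ d + 1) :
    (egervaryDilation N D D' d ^ k) (PiLp.single 2 0 x) 0 = (N ^ k) x := by
  induction k with
  | zero => simp
  | succ k ih =>
    rw [pow_succ', Module.End.mul_apply, egervaryDilation_apply_zero, ih (by omega),
      egervaryDilation_pow_single_apply_of_lt x k (by simp; omega), map_zero, add_zero,
      pow_succ', mul_apply_eq_comp]

end Egervary

theorem norm_aeval_le_one_of_defects {E : Type*} [NormedAddCommGroup E] [InnerProductSpace ℂ E]
    [FiniteDimensional ℂ E] {N D D' : E →L[ℂ] E} (hD : IsSelfAdjoint D) (hD' : IsSelfAdjoint D')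
    (hN : star N * N + D * D = 1) (hN' : N * star N + D' * D' = 1) (hND : D' * N = N * D)
    {q : ℂ[X]} (hq : ∀ z : ℂ, ‖z‖ ≤ 1 → ‖q.eval z‖ ≤ 1) :
    ‖aeval N q‖ ≤ 1 := by
  let W := PiLp 2 fun _ : Fin (q.natDegree + 2) => E
  let e : W ≃ₗᵢ[ℂ] W := LinearIsometry.toLinearIsometryEquiv
    ((egervaryDilation N D D' _).isometryOfInner (inner_egervaryDilation hD hD' hN hN' hND)) rfl
  refine norm_aeval_le_one_of_dilation (Unitary.linearIsometryEquiv.symm e).2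
    (PiLp.single 2 0) (fun x => (PiLp.norm_single 2 (fun _ => E) 0 x).le)
    (PiLp.proj 2 (fun _ => E) 0) (PiLp.norm_apply_le · 0) (fun k hk x => ?_) hq
  have hpow : ⇑((Unitary.linearIsometryEquiv.symm e : W →L[ℂ] W) ^ k)
      = ⇑(egervaryDilation N D D' _ ^ k) := by
    rw [FunLike.coe_pow_eq_iterate, Module.End.coe_pow]
    rfl
  rw [PiLp.proj_apply, hpow]
  exact egervaryDilation_pow_single_apply_zero x (Nat.le_succ_of_le hk)

lemma Matrix.norm_toEuclideanCLM_aeval_le_one_of_defects {m : Type*} [Fintype m]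
    [DecidableEq m] {N D D' : Matrix m m ℂ} (hD : IsSelfAdjoint D) (hD' : IsSelfAdjoint D')
    (hN : star N * N + D * D = 1) (hN' : N * star N + D' * D' = 1) (hND : D' * N = N * D)
    {q : ℂ[X]} (hq : ∀ z : ℂ, ‖z‖ ≤ 1 → ‖q.eval z‖ ≤ 1) :
    ‖Matrix.toEuclideanCLM (𝕜 := ℂ) (aeval N q)‖ ≤ 1 := by
  let φ := Matrix.toEuclideanCLM (𝕜 := ℂ) (n := m)
  rw [← aeval_algHom_apply]
  refine norm_aeval_le_one_of_defects (hD.map φ) (hD'.map φ) ?_ ?_ ?_ hq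
  · rw [← map_star, ← map_mul, ← map_mul, ← map_add, hN, map_one]
  · rw [← map_star, ← map_mul, ← map_mul, ← map_add, hN', map_one]
  · rw [← map_mul, ← map_mul, hND]

lemma Complex.exists_conj_eq_conj_mul_self_add_mul_self_eq_one {a : ℂ} (ha : ‖a‖ ≤ 1) :
    ∃ s : ℂ, conj s = s ∧ conj a * a + s * s = 1 := by
  refine ⟨(√(1 - ‖a‖ ^ 2) : ℝ), Complex.conj_ofReal _, ?_⟩
  rw [Complex.conj_mul', ← Complex.ofReal_mul, Real.mul_self_sqrt (by nlinarith [norm_nonneg a])]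
  push_cast
  ring

lemma norm_toEuclideanCLM_aeval_shift_le_one {a b : ℂ} (ha : ‖a‖ ≤ 1) (hb : ‖b‖ ≤ 1)
    {q : ℂ[X]} (hq : ∀ z : ℂ, ‖z‖ ≤ 1 → ‖q.eval z‖ ≤ 1) :
    ‖Matrix.toEuclideanCLM (𝕜 := ℂ) (aeval !![0, a, 0; 0, 0, b; 0, 0, 0] q)‖ ≤ 1 := by
  obtain ⟨s, hs, has⟩ := Complex.exists_conj_eq_conj_mul_self_add_mul_self_eq_one ha
  obtain ⟨t, ht, hbt⟩ := Complex.exists_conj_eq_conj_mul_self_add_mul_self_eq_one hb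
  let N : Matrix (Fin 3) (Fin 3) ℂ := !![0, a, 0; 0, 0, b; 0, 0, 0]
  let D : Matrix (Fin 3) (Fin 3) ℂ := !![1, 0, 0; 0, s, 0; 0, 0, t]
  let D' : Matrix (Fin 3) (Fin 3) ℂ := !![s, 0, 0; 0, t, 0; 0, 0, 1]
  have hNstar : star N = !![0, 0, 0; conj a, 0, 0; 0, conj b, 0] := by
    ext i j; fin_cases i <;> fin_cases j <;> simp [N]
  refine Matrix.norm_toEuclideanCLM_aeval_le_one_of_defects (D := D) (D' := D') ?_ ?_ ?_ ?_ ?_ hq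
  · ext i j; fin_cases i <;> fin_cases j <;> simp [D, hs, ht]
  · ext i j; fin_cases i <;> fin_cases j <;> simp [D', hs, ht]
  · simp [hNstar, N, D, Matrix.one_fin_three, has, hbt]
  · simp [hNstar, N, D', Matrix.one_fin_three, mul_comm a, mul_comm b, has, hbt]
  · simp [D, D', mul_comm]

lemma exists_contractive_factorization {𝕜 ι : Type*} [NormedField 𝕜] [Finite ι]
    {α β : ι → 𝕜} (hαβ : ∀ j k, α j * β k = α k * β j)
    (hα : ∀ j, ‖α j‖ ≤ 1) (hβ : ∀ j, ‖β j‖ ≤ 1) :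
    ∃ (a b : 𝕜) (γ : ι → 𝕜), ‖a‖ ≤ 1 ∧ ‖b‖ ≤ 1 ∧ (∀ j, ‖γ j‖ ≤ 1) ∧
      ∀ j, α j = γ j * a ∧ β j = γ j * b := by
  by_cases hα0 : ∀ j, α j = 0
  · exact ⟨0, 1, β, by simp, by simp, hβ, fun j => by simp [hα0 j]⟩
  push Not at hα0
  obtain ⟨j₁, hj₁⟩ := hα0
  have : Nonempty ι := ⟨j₁⟩
  -- dividing by an `α j₀` of maximal norm keeps the ratios in the unit disc
  obtain ⟨j₀, hj₀⟩ := Finite.exists_max fun j => ‖α j‖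
  have hα₀ : α j₀ ≠ 0 := norm_pos_iff.mp ((norm_pos_iff.mpr hj₁).trans_le (hj₀ j₁))
  refine ⟨α j₀, β j₀, fun j => α j / α j₀, hα j₀, hβ j₀, fun j => ?_, fun j => ⟨?_, ?_⟩⟩
  · rw [norm_div]
    exact div_le_one_of_le₀ (hj₀ j) (norm_nonneg _)
  · field_simp
  · field_simp
    linear_combination hαβ j₀ j

lemma opEval_aeval {n : ℕ} {R : Type*} [Ring R] [Algebra ℂ R] (N : R) (f : Fin n → ℂ[X])
    (p : MvPolynomial (Fin n) ℂ) :
    opEval (fun i => aeval N (f i)) p = aeval N (MvPolynomial.aeval f p) := by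
  conv_rhs => rw [p.as_sum]
  simp only [opEval, map_sum, MvPolynomial.aeval_monomial, ← Algebra.smul_def,
    Finsupp.prod_fintype _ _ (fun i => pow_zero _), ← List.prod_ofFn, map_smul, map_list_prod,
    List.map_ofFn, Function.comp_def, map_pow]

lemma Polynomial.eval_mvPolynomial_aeval {R σ : Type*} [CommSemiring R] (f : σ → R[X])
    (p : MvPolynomial σ R) (x : R) : (MvPolynomial.aeval f p).eval x = MvPolynomial.eval (fun i => (f i).eval x) p := by
  rw [← coe_aeval_eq_eval, ← AlgHom.comp_apply, MvPolynomial.comp_aeval]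
  rfl

/-- von-Neumann inequality for commuting `n`-tuples of `3×3` strictly upper-triangular
matrices `Tⱼ = [[0, αⱼ, 0], [0, 0, βⱼ], [0, 0, 0]]` with `αⱼβₖ = αₖβⱼ` and
`|αⱼ|, |βⱼ| ≤ 1`. -/
theorem stmt12 (n : ℕ) (α β : Fin n → ℂ)
    (hcomm : ∀ j k, α j * β k = α k * β j)
    (hα : ∀ j, ‖α j‖ ≤ 1) (hβ : ∀ j, ‖β j‖ ≤ 1)
    (T : Fin n → Matrix (Fin 3) (Fin 3) ℂ)
    (hT : ∀ j, T j = !![0, α j, 0; 0, 0, β j; 0, 0, 0])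
    (p : MvPolynomial (Fin n) ℂ)
    (hp : ∀ z : Fin n → ℂ, (∀ i, ‖z i‖ ≤ 1) → ‖MvPolynomial.eval z p‖ ≤ 1) :
    ‖Matrix.toEuclideanCLM (𝕜 := ℂ) (opEval T p)‖ ≤ 1 := by
  obtain ⟨a, b, γ, ha, hb, hγ, hαβ⟩ := exists_contractive_factorization hcomm hα hβ
  have hTN : T = fun j => aeval !![0, a, 0; 0, 0, b; 0, 0, 0] (C (γ j) * X) := by
    funext j
    rw [hT j, (hαβ j).1, (hαβ j).2]
    rw [map_mul, aeval_C, aeval_X, ← Algebra.smul_def]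
    ext i k; fin_cases i <;> fin_cases k <;> simp
  rw [hTN, opEval_aeval]
  refine norm_toEuclideanCLM_aeval_shift_le_one ha hb fun z hz => ?_
  rw [eval_mvPolynomial_aeval]
  exact hp _ fun i => by simpa using mul_le_one₀ (hγ i) (norm_nonneg z) hz
end

section
/- For n > 1 and any k ∈ ℕ, there is no linear isometric embedding of ℓ¹(n) into the k×k complex matrices M_k with the operator norm. In particular, there do not exist T₁, T₂ ∈ M_k such that ‖a₁T₁ + a₂T₂‖ = |a₁| + |a₂| for all a₁, a₂ ∈ ℂ. -/
/-!
Suppose `‖a • A + b • B‖ = ‖a‖ + ‖b‖` for all `a b : ℂ`. For every unit `w`, the norm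
`‖A + w • B‖ = 2` is attained at some `x` with `‖x‖ ≤ 1`; equality in the triangle inequality in
the strictly convex space `E` forces `A x = w • B x` with `‖A x‖ = ‖x‖ = 1`, and then
`⟪w • x, B† (A x)⟫ = ‖A x‖² = 1` is the equality case of Cauchy–Schwarz, so `B† A x = w • x`.
Thus the whole unit circle consists of eigenvalues of `B† A`, impossible in finite dimension.
An isometric copy of `ℓ¹(n)`, `n ≥ 2`, contains such a pair: the images of two basis vectors.
-/

open ContinuousLinearMap

theorem ContinuousLinearMap.exists_norm_le_one_norm_apply_eq_opNorm {𝕜 E F : Type*} [RCLike 𝕜]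
    [NormedAddCommGroup E] [NormedSpace 𝕜 E] [FiniteDimensional 𝕜 E]
    [NormedAddCommGroup F] [NormedSpace 𝕜 F] (f : E →L[𝕜] F) :
    ∃ x : E, ‖x‖ ≤ 1 ∧ ‖f x‖ = ‖f‖ := by
  have : ProperSpace E := FiniteDimensional.proper_rclike 𝕜 E
  obtain ⟨x, hx, hmax⟩ := (isCompact_closedBall (0 : E) 1).exists_isMaxOn
    (Metric.nonempty_closedBall.2 zero_le_one) (continuous_norm.comp f.continuous).continuousOn
  rw [mem_closedBall_zero_iff] at hx
  refine ⟨x, hx, le_antisymm ?_ <| opNorm_le_of_unit_norm (norm_nonneg _) fun y hy ↦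
    hmax (mem_closedBall_zero_iff.2 hy.le)⟩
  simpa using f.le_opNorm x |>.trans (mul_le_of_le_one_right f.opNorm_nonneg hx)

theorem eq_of_norm_le_one_of_norm_add_eq_two {E : Type*} [NormedAddCommGroup E]
    [NormedSpace ℝ E] [StrictConvexSpace ℝ E] {u v : E} (hu : ‖u‖ ≤ 1) (hv : ‖v‖ ≤ 1)
    (h : ‖u + v‖ = 2) : u = v := by
  have := norm_add_le u v
  exact eq_of_norm_eq_of_norm_add_eq (by linarith) (by linarith)

theorem eq_of_norm_eq_one_of_inner_eq_one {𝕜 E : Type*} [RCLike 𝕜] [NormedAddCommGroup E]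
    [InnerProductSpace 𝕜 E] {x y : E} (hx : ‖x‖ = 1) (hy : ‖y‖ ≤ 1) (h : inner 𝕜 x y = 1) :
    x = y := by
  have : 1 ≤ ‖y‖ := by simpa [h, hx] using norm_inner_le_norm (𝕜 := 𝕜) x y
  exact (inner_eq_one_iff_of_norm_eq_one hx (hy.antisymm this)).1 h

theorem Complex.sphere_zero_one_infinite : (Metric.sphere (0 : ℂ) 1).Infinite :=
  (isPreconnected_sphere (by simp [Complex.rank_real_complex]) 0 1).infinite_of_nontrivial
    ⟨1, by simp, -1, by simp, by norm_num⟩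

section FiniteDimensional

variable {E : Type*} [NormedAddCommGroup E] [InnerProductSpace ℂ E] [FiniteDimensional ℂ E]

theorem ContinuousLinearMap.hasEigenvalue_adjoint_comp_of_norm_add_smul_eq_two
    {A B : E →L[ℂ] E} (hA : ‖A‖ ≤ 1) (hB : ‖B‖ ≤ 1) {w : ℂ} (hw : ‖w‖ = 1)
    (h : ‖A + w • B‖ = 2) :
    Module.End.HasEigenvalue ((adjoint B ∘L A : E →L[ℂ] E) : E →ₗ[ℂ] E) w := by
  obtain ⟨x, hx, hxnorm⟩ := (A + w • B).exists_norm_le_one_norm_apply_eq_opNorm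
  rw [h, add_apply, smul_apply] at hxnorm
  have hAx : ‖A x‖ ≤ 1 := (A.le_opNorm x).trans (mul_le_one₀ hA (norm_nonneg x) hx)
  have hBx : ‖w • B x‖ ≤ 1 := by
    rw [norm_smul, hw, one_mul]
    exact (B.le_opNorm x).trans (mul_le_one₀ hB (norm_nonneg x) hx)
  have hAwB : A x = w • B x :=
    letI : InnerProductSpace ℝ E := .rclikeToReal ℂ E
    eq_of_norm_le_one_of_norm_add_eq_two hAx hBx hxnorm
  have hAx1 : ‖A x‖ = 1 := by
    have := norm_add_le (A x) (w • B x)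
    linarith
  have hx1 : ‖x‖ = 1 := hx.antisymm <| by
    simpa [hAx1] using (A.le_opNorm x).trans (mul_le_of_le_one_left (norm_nonneg x) hA)
  have hwx : ‖w • x‖ = 1 := by rw [norm_smul, hw, hx1, one_mul]
  have hinner : inner ℂ (w • x) (adjoint B (A x)) = 1 := by
    rw [adjoint_inner_right, map_smul, ← hAwB, inner_self_eq_norm_sq_to_K, hAx1]
    simp
  have hadj : ‖adjoint B (A x)‖ ≤ 1 :=
    calc ‖adjoint B (A x)‖ ≤ ‖adjoint B‖ * ‖A x‖ := le_opNorm _ _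
      _ ≤ 1 := by rw [adjoint.norm_map]; exact mul_le_one₀ hB (norm_nonneg _) hAx
  refine Module.End.hasEigenvalue_of_hasEigenvector (x := x)
    ⟨Module.End.mem_eigenspace_iff.2 ?_, norm_ne_zero_iff.1 (hx1 ▸ one_ne_zero)⟩
  exact (eq_of_norm_eq_one_of_inner_eq_one hwx hadj hinner).symm

theorem ContinuousLinearMap.not_forall_norm_smul_add_smul_eq (A B : E →L[ℂ] E) :
    ¬ ∀ a b : ℂ, ‖a • A + b • B‖ = ‖a‖ + ‖b‖ := by
  intro h
  have hA : ‖A‖ = 1 := by simpa using h 1 0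
  have hB : ‖B‖ = 1 := by simpa using h 0 1
  have hcircle : Metric.sphere (0 : ℂ) 1 ⊆
      {w | Module.End.HasEigenvalue ((adjoint B ∘L A : E →L[ℂ] E) : E →ₗ[ℂ] E) w} := by
    intro w hw
    rw [mem_sphere_zero_iff_norm] at hw
    refine hasEigenvalue_adjoint_comp_of_norm_add_smul_eq_two hA.le hB.le hw ?_
    simpa [hw, one_add_one_eq_two] using h 1 w
  exact Complex.sphere_zero_one_infinite ((Module.End.finite_hasEigenvalue _).subset hcircle)

end FiniteDimensional

theorem sum_norm_smul_single_add_smul_single {ι 𝕜 : Type*} [Fintype ι] [DecidableEq ι]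
    [NormedField 𝕜] {i j : ι} (hij : i ≠ j) (a b : 𝕜) :
    ∑ l, ‖(a • Pi.single i 1 + b • Pi.single j 1 : ι → 𝕜) l‖ = ‖a‖ + ‖b‖ := by
  rw [Fintype.sum_eq_add i j hij fun l hl ↦ by simp [hl.1, hl.2]]
  simp [hij, hij.symm]

/-- For `n > 1`, there is no linear isometric embedding of `ℓ¹(n)` into the `k×k` complex
matrices with the operator norm; in particular there are no matrices `T₁, T₂` with
`‖a₁T₁ + a₂T₂‖ = |a₁| + |a₂|` for all `a₁, a₂ ∈ ℂ`. -/
theorem stmt15 (n k : ℕ) (hn : 1 < n) :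
    (¬ ∃ φ : (Fin n → ℂ) →ₗ[ℂ] Matrix (Fin k) (Fin k) ℂ,
        ∀ a : Fin n → ℂ, ‖Matrix.toEuclideanCLM (𝕜 := ℂ) (φ a)‖ = ∑ i, ‖a i‖) ∧
      ¬ ∃ T₁ T₂ : Matrix (Fin k) (Fin k) ℂ, ∀ a₁ a₂ : ℂ,
        ‖Matrix.toEuclideanCLM (𝕜 := ℂ) (a₁ • T₁ + a₂ • T₂)‖ = ‖a₁‖ + ‖a₂‖ := by
  have no_pair : ¬ ∃ T₁ T₂ : Matrix (Fin k) (Fin k) ℂ, ∀ a₁ a₂ : ℂ,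
      ‖Matrix.toEuclideanCLM (𝕜 := ℂ) (a₁ • T₁ + a₂ • T₂)‖ = ‖a₁‖ + ‖a₂‖ := by
    rintro ⟨T₁, T₂, h⟩
    refine not_forall_norm_smul_add_smul_eq
      (Matrix.toEuclideanCLM (𝕜 := ℂ) T₁) (Matrix.toEuclideanCLM (𝕜 := ℂ) T₂) ?_
    simpa only [map_add, map_smul] using h
  refine ⟨?_, no_pair⟩
  rintro ⟨φ, hφ⟩
  obtain ⟨i, j, hij⟩ := (Fin.nontrivial_iff_two_le.2 hn).exists_pair_ne
  refine no_pair ⟨φ (Pi.single i 1), φ (Pi.single j 1), fun a₁ a₂ ↦ ?_⟩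
  rw [← map_smul, ← map_smul, ← map_add, hφ, sum_norm_smul_single_add_smul_single hij]
end

section
/- Let T₁, …, Tₙ be contractions on Hilbert spaces ℍ₁, …, ℍₙ with the unit circle 𝕋 contained in the spectrum of each Tᵢ. Set T̃ᵢ = I^{⊗(i−1)} ⊗ Tᵢ ⊗ I^{⊗(n−i)} acting on ℍ₁ ⊗ ⋯ ⊗ ℍₙ. Then for all a₁, …, aₙ ∈ ℂ, ‖a₁T̃₁ + ⋯ + aₙT̃ₙ‖ = |a₁| + ⋯ + |aₙ|; i.e., the map (a₁,…,aₙ) ↦ Σ aᵢT̃ᵢ is an isometric embedding of ℓ¹(n) into B(ℍ₁ ⊗ ⋯ ⊗ ℍₙ). -/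
/-!
The bound `‖∑ aᵢ T̃ᵢ‖ ≤ ∑ |aᵢ|` is the triangle inequality. Conversely, a unimodular `μ` in the
spectrum of a contraction lies on the boundary of the spectrum, hence is an approximate
eigenvalue: if `k ∉ σ(T)` is close to `μ`, the resolvent `(k - T)⁻¹` has norm at least
`|μ - k|⁻¹`, and a vector it stretches is almost an eigenvector. Taking `μᵢ = |aᵢ| / aᵢ` and
approximate eigenvectors `xᵢ` of `Tᵢ`, the elementary tensors `x₁ ⊗ ⋯ ⊗ xₙ` are approximate
eigenvectors of every `T̃ᵢ` at once, so `∑ aᵢ μᵢ = ∑ |aᵢ|` is an approximate eigenvalue of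
`∑ aᵢ T̃ᵢ` and is therefore bounded by its norm.
-/

open Filter Topology

namespace spectrum

variable {𝕜 A : Type*} [NormedField 𝕜] [NormedRing A] [NormedAlgebra 𝕜 A] [CompleteSpace A]
  [NormOneClass A]

theorem inv_norm_inv_le_norm_sub {a : A} {k k' : 𝕜} (hk : k ∈ spectrum 𝕜 a) (u : Aˣ)
    (hu : (u : A) = algebraMap 𝕜 A k' - a) : ‖(↑u⁻¹ : A)‖⁻¹ ≤ ‖k - k'‖ := by
  by_contra! h
  rw [← norm_algebraMap' A] at h
  refine hk ⟨Units.add u _ h, ?_⟩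
  simp [Units.add, hu, map_sub]

theorem mem_frontier_of_norm_le [NormedSpace ℝ 𝕜] {a : A} {k : 𝕜}
    (hk : k ∈ spectrum 𝕜 a) (h : ‖a‖ ≤ ‖k‖) : k ∈ frontier (spectrum 𝕜 a) := by
  refine ⟨subset_closure hk, fun hint => ?_⟩
  have := interior_mono (subset_closedBall_norm a) hint
  rw [interior_closedBall', mem_ball_zero_iff] at this
  exact this.not_ge h

end spectrum

namespace ContinuousLinearMap

variable {𝕜 E : Type*} [RCLike 𝕜] [NormedAddCommGroup E] [NormedSpace 𝕜 E] [Nontrivial E]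

theorem exists_norm_eq_one_norm_apply_lt (u : (E →L[𝕜] E)ˣ) {ε : ℝ} (hε : 0 < ε)
    (h : ‖(↑u⁻¹ : E →L[𝕜] E)‖⁻¹ < ε) : ∃ x : E, ‖x‖ = 1 ∧ ‖(u : E →L[𝕜] E) x‖ < ε := by
  obtain ⟨y, hy, hvy⟩ := (↑u⁻¹ : E →L[𝕜] E).exists_lt_apply_of_lt_opNorm
    (inv_lt_of_inv_lt₀ (Units.norm_pos u⁻¹) h)
  set z := (↑u⁻¹ : E →L[𝕜] E) y
  have hz : 0 < ‖z‖ := (inv_pos.2 hε).trans hvy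
  have huz : (u : E →L[𝕜] E) z = y := by
    show ((u : E →L[𝕜] E) * ↑u⁻¹) y = y
    rw [Units.mul_inv]; rfl
  refine ⟨((‖z‖ : 𝕜)⁻¹) • z, norm_smul_inv_norm (norm_pos_iff.1 hz), ?_⟩
  rw [map_smul, huz, norm_smul, norm_inv, RCLike.norm_ofReal, abs_of_pos hz, inv_mul_lt_iff₀ hz]
  calc ‖y‖ < 1 := hy
    _ < ‖z‖ * ε := by rw [mul_comm, ← inv_mul_lt_iff₀ hε, mul_one]; exact hvy

variable [CompleteSpace E]

theorem exists_norm_eq_one_norm_sub_smul_lt_of_mem_frontier {T : E →L[𝕜] E} {μ : 𝕜}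
    (hμ : μ ∈ frontier (spectrum 𝕜 T)) {ε : ℝ} (hε : 0 < ε) :
    ∃ x : E, ‖x‖ = 1 ∧ ‖T x - μ • x‖ < ε := by
  rw [frontier_eq_closure_inter_closure, (spectrum.isClosed T).closure_eq] at hμ
  obtain ⟨hμT, hμc⟩ := hμ
  obtain ⟨k, hk, hμk⟩ := Metric.mem_closure_iff.1 hμc (ε / 2) (half_pos hε)
  obtain ⟨u, hu⟩ := spectrum.notMem_iff.1 hk
  obtain ⟨x, hx1, hux⟩ := exists_norm_eq_one_norm_apply_lt u (half_pos hε)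
    ((spectrum.inv_norm_inv_le_norm_sub hμT u hu).trans_lt (by rwa [← dist_eq_norm]))
  refine ⟨x, hx1, ?_⟩
  have hsplit : T x - μ • x = (k - μ) • x - (u : E →L[𝕜] E) x := by
    rw [hu]
    simp [sub_smul, Algebra.algebraMap_eq_smul_one]
  calc ‖T x - μ • x‖ ≤ ‖k - μ‖ * ‖x‖ + ‖(u : E →L[𝕜] E) x‖ := by
        rw [hsplit, ← norm_smul]; exact norm_sub_le _ _
    _ < ε / 2 + ε / 2 := by
        rw [hx1, mul_one, ← dist_eq_norm, dist_comm]; exact add_lt_add hμk hux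
    _ = ε := add_halves ε

theorem exists_seq_tendsto_sub_smul_of_mem_frontier {T : E →L[𝕜] E} {μ : 𝕜}
    (hμ : μ ∈ frontier (spectrum 𝕜 T)) :
    ∃ x : ℕ → E, (∀ k, ‖x k‖ = 1) ∧ Tendsto (fun k => T (x k) - μ • x k) atTop (𝓝 0) := by
  choose x hx1 hx using fun k : ℕ =>
    exists_norm_eq_one_norm_sub_smul_lt_of_mem_frontier hμ (Nat.one_div_pos_of_nat (n := k))
  exact ⟨x, hx1, squeeze_zero_norm (fun k => (hx k).le) tendsto_one_div_add_atTop_nhds_zero_nat⟩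

end ContinuousLinearMap

section InnerPreserving

variable {𝕜 E F : Type*} [RCLike 𝕜] [NormedAddCommGroup E] [InnerProductSpace 𝕜 E]
  [NormedAddCommGroup F] [InnerProductSpace 𝕜 F]

theorem norm_sub_smul_eq_of_inner_map_map {f : E → F}
    (hf : ∀ y z, inner 𝕜 (f y) (f z) = inner 𝕜 y z) (y z : E) (c : 𝕜) :
    ‖f y - c • f z‖ = ‖y - c • z‖ := by
  have hn : ∀ z, ‖f z‖ = ‖z‖ := fun z => by
    rw [@norm_eq_sqrt_re_inner 𝕜, @norm_eq_sqrt_re_inner 𝕜, hf]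
  rw [← sq_eq_sq₀ (norm_nonneg _) (norm_nonneg _), @norm_sub_sq 𝕜, @norm_sub_sq 𝕜,
    inner_smul_right, inner_smul_right, hf, norm_smul, norm_smul, hn, hn]

variable {ι : Type*} [Fintype ι] {H : ι → Type*} [∀ i, NormedAddCommGroup (H i)]
  [∀ i, InnerProductSpace 𝕜 (H i)] {Φ : (∀ i, H i) → F}

theorem norm_map_eq_one_of_inner_map_map
    (hΦ : ∀ x y, inner 𝕜 (Φ x) (Φ y) = ∏ i, inner 𝕜 (x i) (y i)) {x : ∀ i, H i}
    (hx : ∀ i, ‖x i‖ = 1) : ‖Φ x‖ = 1 := by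
  rw [@norm_eq_sqrt_re_inner 𝕜, hΦ]
  simp [inner_self_eq_norm_sq_to_K, hx]

theorem inner_map_update_update [DecidableEq ι]
    (hΦ : ∀ x y, inner 𝕜 (Φ x) (Φ y) = ∏ i, inner 𝕜 (x i) (y i)) {x : ∀ i, H i} {i : ι}
    (hx : ∀ j ≠ i, ‖x j‖ = 1) (y z : H i) :
    inner 𝕜 (Φ (Function.update x i y)) (Φ (Function.update x i z)) = inner 𝕜 y z := by
  rw [hΦ, Finset.prod_eq_single i (fun j _ hj => by
    simp [Function.update_of_ne hj, inner_self_eq_norm_sq_to_K, hx j hj]) (by simp)]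
  simp

end InnerPreserving

namespace ContinuousLinearMap

variable {𝕜 E ι : Type*} [NontriviallyNormedField 𝕜] [NormedAddCommGroup E] [NormedSpace 𝕜 E]

theorem norm_sum_smul_le_of_norm_le_one {s : Finset ι} {A : ι → E →L[𝕜] E}
    (hA : ∀ i ∈ s, ‖A i‖ ≤ 1) (a : ι → 𝕜) : ‖∑ i ∈ s, a i • A i‖ ≤ ∑ i ∈ s, ‖a i‖ :=
  (norm_sum_le _ _).trans <| Finset.sum_le_sum fun i hi =>
    (norm_smul_le _ _).trans (mul_le_of_le_one_right (norm_nonneg _) (hA i hi))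

theorem norm_le_opNorm_of_tendsto_sub_smul {S : E →L[𝕜] E} {μ : 𝕜} {v : ℕ → E}
    (hv : ∀ k, ‖v k‖ = 1) (h : Tendsto (fun k => S (v k) - μ • v k) atTop (𝓝 0)) :
    ‖μ‖ ≤ ‖S‖ := by
  refine ge_of_tendsto' (by simpa using tendsto_const_nhds.add h.norm) fun k => ?_
  calc ‖μ‖ = ‖S (v k) - (S (v k) - μ • v k)‖ := by rw [sub_sub_cancel, norm_smul, hv, mul_one]
    _ ≤ ‖S (v k)‖ + ‖S (v k) - μ • v k‖ := norm_sub_le _ _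
    _ ≤ ‖S‖ + ‖S (v k) - μ • v k‖ := by grw [S.le_opNorm, hv, mul_one]

theorem tendsto_sum_smul_sub_smul {s : Finset ι} {A : ι → E →L[𝕜] E} {μ : ι → 𝕜}
    {v : ℕ → E} (h : ∀ i ∈ s, Tendsto (fun k => A i (v k) - μ i • v k) atTop (𝓝 0))
    (a : ι → 𝕜) :
    Tendsto (fun k => (∑ i ∈ s, a i • A i) (v k) - (∑ i ∈ s, a i * μ i) • v k) atTop (𝓝 0) := by
  have hsum : ∀ k, (∑ i ∈ s, a i • A i) (v k) - (∑ i ∈ s, a i * μ i) • v k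
      = ∑ i ∈ s, a i • (A i (v k) - μ i • v k) := fun k => by
    simp [Finset.sum_smul, smul_sub, mul_smul]
  rw [tendsto_congr hsum]
  simpa using tendsto_finsetSum s fun i hi => (h i hi).const_smul (a i)

end ContinuousLinearMap

theorem stmt17_general (n : ℕ) (H : Fin n → Type*)
    [∀ i, NormedAddCommGroup (H i)] [∀ i, InnerProductSpace ℂ (H i)]
    [∀ i, CompleteSpace (H i)]
    (K : Type*) [NormedAddCommGroup K] [InnerProductSpace ℂ K]
    (T : ∀ i, H i →L[ℂ] H i) (hT : ∀ i, ‖T i‖ ≤ 1)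
    (hspec : ∀ i, ∀ μ : ℂ, ‖μ‖ = 1 → μ ∈ spectrum ℂ (T i))
    (Φ : (∀ i, H i) → K)
    (hΦ : ∀ x y : ∀ i, H i, (inner ℂ (Φ x) (Φ y) : ℂ) = ∏ i, (inner ℂ (x i) (y i) : ℂ))
    (Ttil : Fin n → K →L[ℂ] K) (hTtil : ∀ i, ‖Ttil i‖ ≤ 1)
    (hact : ∀ (i : Fin n) (x : ∀ i, H i),
      Ttil i (Φ x) = Φ (Function.update x i (T i (x i))))
    (a : Fin n → ℂ) :
    ‖∑ i, a i • Ttil i‖ = ∑ i, ‖a i‖ := by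
  have hH : ∀ i, Nontrivial (H i) := fun i => by
    by_contra h
    rw [not_nontrivial_iff_subsingleton] at h
    simpa [spectrum.of_subsingleton] using hspec i 1 norm_one
  choose μ hμ1 hμa using fun i => RCLike.exists_norm_eq_mul_self (a i)
  choose x hx1 hx using fun i => ContinuousLinearMap.exists_seq_tendsto_sub_smul_of_mem_frontier
    (spectrum.mem_frontier_of_norm_le (A := H i →L[ℂ] H i) (hspec i (μ i) (hμ1 i))
      ((hT i).trans (hμ1 i).ge))
  set v := fun k => Φ fun i => x i k
  have hv : ∀ i, Tendsto (fun k => Ttil i (v k) - μ i • v k) atTop (𝓝 0) := by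
    intro i
    refine squeeze_zero_norm (fun k => le_of_eq ?_) (tendsto_zero_iff_norm_tendsto_zero.1 (hx i))
    have := norm_sub_smul_eq_of_inner_map_map
      (inner_map_update_update hΦ (x := fun j => x j k) fun j _ => hx1 j k) (T i (x i k)) (x i k)
      (μ i)
    rwa [Function.update_eq_self, ← hact] at this
  refine le_antisymm
    (ContinuousLinearMap.norm_sum_smul_le_of_norm_le_one (fun i _ => hTtil i) a) ?_
  calc ∑ i, ‖a i‖ = ‖∑ i, a i * μ i‖ := by
        simp_rw [mul_comm (a _), ← hμa]
        rw [← RCLike.ofReal_sum, RCLike.norm_of_nonneg (by positivity)]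
    _ ≤ ‖∑ i, a i • Ttil i‖ := ContinuousLinearMap.norm_le_opNorm_of_tendsto_sub_smul
      (fun k => norm_map_eq_one_of_inner_map_map hΦ fun i => hx1 i k)
      (ContinuousLinearMap.tendsto_sum_smul_sub_smul (fun i _ => hv i) a)

/-- Isometric embedding of `ℓ¹(n)` into the bounded operators on a Hilbert-space tensor
product `ℍ₁ ⊗ ⋯ ⊗ ℍₙ`.  The tensor product is axiomatized by a map
`Φ : Πᵢ ℍᵢ → K` with `⟨Φ x, Φ y⟩ = Πᵢ ⟨xᵢ, yᵢ⟩` (elementary tensors), and the operators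
`T̃ᵢ = I ⊗ ⋯ ⊗ Tᵢ ⊗ ⋯ ⊗ I` are characterized by being contractions acting on
elementary tensors in the `i`-th factor.  If each `Tᵢ` is a contraction whose spectrum
contains the unit circle, then `‖Σ aᵢ T̃ᵢ‖ = Σ |aᵢ|`. -/
theorem stmt17 (n : ℕ) (H : Fin n → Type*)
    [∀ i, NormedAddCommGroup (H i)] [∀ i, InnerProductSpace ℂ (H i)]
    [∀ i, CompleteSpace (H i)]
    (K : Type*) [NormedAddCommGroup K] [InnerProductSpace ℂ K] [CompleteSpace K]
    (T : ∀ i, H i →L[ℂ] H i) (hT : ∀ i, ‖T i‖ ≤ 1)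
    (hspec : ∀ i, ∀ μ : ℂ, ‖μ‖ = 1 → μ ∈ spectrum ℂ (T i))
    (Φ : (∀ i, H i) → K)
    (hΦ : ∀ x y : ∀ i, H i, (inner ℂ (Φ x) (Φ y) : ℂ) = ∏ i, (inner ℂ (x i) (y i) : ℂ))
    (Ttil : Fin n → K →L[ℂ] K) (hTtil : ∀ i, ‖Ttil i‖ ≤ 1)
    (hact : ∀ (i : Fin n) (x : ∀ i, H i),
      Ttil i (Φ x) = Φ (Function.update x i (T i (x i))))
    (a : Fin n → ℂ) :
    ‖∑ i, a i • Ttil i‖ = ∑ i, ‖a i‖ :=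
  stmt17_general n H K T hT hspec Φ hΦ Ttil hTtil hact a
end

section
/- Let F(z) = A₁ + A₂z + A₃z² + ⋯ be a holomorphic function on the unit disc 𝔻 taking values in the open unit ball (in operator norm) of the k×k complex matrices. Then the 2k×2k block matrix [[A₁, A₂], [0, A₁]] has operator norm at most 1. -/
/-!
For `x = (x₀, x₁)` and `y = (y₀, y₁)` put `P w = w • x₀ + x₁` and `Q w = w • y₀ + y₁`, and average
`⟪Q w, F w (P w)⟫` over the circle `|w| = r < 1`. Since `conj w = r² / w` there, the Cauchy formulas
for `F 0` and `F' 0` evaluate the average to `r² (⟪y₀, A₁ x₀⟫ + ⟪y₀, A₂ x₁⟫) + ⟪y₁, A₁ x₁⟫`, while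
`‖F w‖ ≤ 1` bounds the real part of the integrand by `(‖P w‖² + ‖Q w‖²) / 2`, whose average is
`(r² (‖x₀‖² + ‖y₀‖²) + ‖x₁‖² + ‖y₁‖²) / 2`. Letting `r → 1` gives
`re ⟪y, T x⟫ ≤ (‖x‖² + ‖y‖²) / 2` for the block matrix `T`, and `y = T x` yields `‖T x‖ ≤ ‖x‖`.
-/

open Complex Metric Real ComplexConjugate
open scoped InnerProductSpace

theorem DiffContOnCl.circleAverage_sub_inv_smul {E : Type*} [NormedAddCommGroup E] [NormedSpace ℂ E]
    [CompleteSpace E] {f : ℂ → E} {c : ℂ} {R : ℝ} (hf : DiffContOnCl ℂ f (ball c R))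
    (hR : 0 < R) :
    Real.circleAverage (fun z ↦ (z - c)⁻¹ • f z) c R = deriv f c := by
  have hsq : ∀ z : ℂ, (z - c)⁻¹ • (z - c)⁻¹ • f z = (1 / (z - c) ^ 2) • f z := fun z ↦ by
    rw [smul_smul, one_div, ← mul_inv, sq]
  simp_rw [circleAverage_eq_circleIntegral hR.ne', hsq, hf.deriv_eq_smul_circleIntegral hR,
    smul_smul, inv_mul_cancel₀ two_pi_I_ne_zero, one_smul]

theorem circleAverage_conj_mul_add {h k : ℂ → ℂ} {r : ℝ} (hr : 0 < r)
    (hh : DifferentiableOn ℂ h (closedBall 0 r)) (hk : DifferentiableOn ℂ k (closedBall 0 r)) :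
    circleAverage (fun w ↦ conj w * h w + k w) 0 r = r ^ 2 * deriv h 0 + k 0 := by
  have hball : closure (ball (0 : ℂ) |r|) ⊆ closedBall 0 r := by
    rw [abs_of_pos hr]; exact closure_ball_subset_closedBall
  have hsphere : sphere (0 : ℂ) |r| ⊆ closedBall 0 r := by
    rw [abs_of_pos hr]; exact sphere_subset_closedBall
  have hconj : Set.EqOn (fun w ↦ conj w * h w + k w)
      (fun w ↦ (r : ℂ) ^ 2 • ((w - 0)⁻¹ • h w) + k w) (sphere 0 |r|) := by
    intro w hw
    rw [mem_sphere_zero_iff_norm, abs_of_pos hr] at hw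
    have hw0 : w ≠ 0 := by rintro rfl; simp only [norm_zero] at hw; exact hr.ne hw
    have : conj w = (r : ℂ) ^ 2 * w⁻¹ := by
      rw [← hw, ← Complex.mul_conj', mul_comm w, mul_assoc, mul_inv_cancel₀ hw0, mul_one]
    simp only [this, sub_zero, smul_eq_mul]; ring
  have hint : CircleIntegrable (fun w ↦ (w - 0)⁻¹ • h w) 0 r := by
    refine ContinuousOn.circleIntegrable' (ContinuousOn.fun_smul ?_ (hh.continuousOn.mono hsphere))
    refine ContinuousOn.inv₀ (by fun_prop) fun w hw ↦ ?_
    simpa using ne_of_mem_sphere hw (abs_ne_zero.2 hr.ne')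
  rw [circleAverage_congr_sphere hconj, circleAverage_fun_add, circleAverage_fun_smul,
    ((hh.mono closure_ball_subset_closedBall).diffContOnCl).circleAverage_sub_inv_smul hr,
    ((hk.mono hball).diffContOnCl).circleAverage, smul_eq_mul]
  · exact hint.const_smul
  · exact (hk.continuousOn.mono hsphere).circleIntegrable'

theorem le_of_forall_sq_mul_le {a b : ℝ} (h : ∀ r : ℝ, 0 < r → r < 1 → r ^ 2 * a ≤ b) :
    a ≤ b := by
  have hlim : Filter.Tendsto (fun r : ℝ ↦ r ^ 2 * a) (nhdsWithin 1 (Set.Iio 1)) (nhds a) :=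
    tendsto_nhdsWithin_of_tendsto_nhds <| by
      simpa using (by fun_prop : Continuous fun r : ℝ ↦ r ^ 2 * a).tendsto 1
  exact le_of_tendsto hlim
    (Filter.mem_of_superset (Ioo_mem_nhdsLT one_pos) fun r hr ↦ h r hr.1 hr.2)

theorem re_inner_apply_le_of_norm_le_one {E : Type*} [NormedAddCommGroup E] [InnerProductSpace ℂ E]
    {T : E →L[ℂ] E} (hT : ‖T‖ ≤ 1) (x y : E) :
    re ⟪y, T x⟫_ℂ ≤ (‖x‖ ^ 2 + ‖y‖ ^ 2) / 2 :=
  calc re ⟪y, T x⟫_ℂ ≤ ‖y‖ * ‖T x‖ := (re_le_norm _).trans (norm_inner_le_norm _ _)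
    _ ≤ ‖y‖ * ‖x‖ := by gcongr; simpa using T.le_of_opNorm_le hT x
    _ ≤ (‖x‖ ^ 2 + ‖y‖ ^ 2) / 2 := by nlinarith [sq_nonneg (‖x‖ - ‖y‖)]

theorem re_circleAverage_le_re_circleAverage {f g : ℂ → ℂ} {c : ℂ} {R : ℝ}
    (hf : CircleIntegrable f c R) (hg : CircleIntegrable g c R)
    (h : ∀ z ∈ sphere c |R|, re (f z) ≤ re (g z)) :
    re (circleAverage f c R) ≤ re (circleAverage g c R) := by
  rw [← reCLM_apply, ← reCLM_apply, ← reCLM.circleAverage_comp_comm hf,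
    ← reCLM.circleAverage_comp_comm hg]
  exact circleAverage_mono ⟨hf.1.re, hf.2.re⟩ ⟨hg.1.re, hg.2.re⟩ h

section
variable {E : Type*} [NormedAddCommGroup E] [InnerProductSpace ℂ E] {G : ℂ → E →L[ℂ] E}
  {s : Set ℂ}

theorem differentiableOn_inner_apply_smul_add
    (hG : ∀ x y, DifferentiableOn ℂ (fun z ↦ ⟪y, G z x⟫_ℂ) s) (x₀ x₁ y : E) :
    DifferentiableOn ℂ (fun z ↦ ⟪y, G z (z • x₀ + x₁)⟫_ℂ) s := by
  simp only [map_add, map_smul, inner_add_right, inner_smul_right]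
  exact (differentiableOn_id.mul (hG x₀ y)).add (hG x₁ y)

theorem continuousOn_inner_smul_add_apply_smul_add
    (hG : ∀ x y, DifferentiableOn ℂ (fun z ↦ ⟪y, G z x⟫_ℂ) s) (x₀ x₁ y₀ y₁ : E) :
    ContinuousOn (fun w ↦ ⟪w • y₀ + y₁, G w (w • x₀ + x₁)⟫_ℂ) s := by
  simp only [inner_add_left, inner_smul_left]
  exact (continuous_conj.continuousOn.mul
    (differentiableOn_inner_apply_smul_add hG x₀ x₁ y₀).continuousOn).add
    (differentiableOn_inner_apply_smul_add hG x₀ x₁ y₁).continuousOn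

variable {r : ℝ}

theorem circleAverage_inner_smul_add_apply_smul_add (hr : 0 < r)
    (hG : ∀ x y, DifferentiableOn ℂ (fun z ↦ ⟪y, G z x⟫_ℂ) (closedBall 0 r)) (x₀ x₁ y₀ y₁ : E) :
    circleAverage (fun w ↦ ⟪w • y₀ + y₁, G w (w • x₀ + x₁)⟫_ℂ) 0 r
      = r ^ 2 * (⟪y₀, G 0 x₀⟫_ℂ + deriv (fun z ↦ ⟪y₀, G z x₁⟫_ℂ) 0) + ⟪y₁, G 0 x₁⟫_ℂ := by
  have hderiv : HasDerivAt (fun z ↦ ⟪y₀, G z (z • x₀ + x₁)⟫_ℂ)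
      (⟪y₀, G 0 x₀⟫_ℂ + deriv (fun z ↦ ⟪y₀, G z x₁⟫_ℂ) 0) 0 := by
    have h0 : closedBall (0 : ℂ) r ∈ nhds 0 := closedBall_mem_nhds 0 hr
    simp only [map_add, map_smul, inner_add_right, inner_smul_right]
    exact (((hasDerivAt_id' 0).fun_mul ((hG x₀ y₀).differentiableAt h0).hasDerivAt).fun_add
      ((hG x₁ y₀).differentiableAt h0).hasDerivAt).congr_deriv (by simp)
  simp only [inner_add_left, inner_smul_left]
  rw [circleAverage_conj_mul_add hr (differentiableOn_inner_apply_smul_add hG x₀ x₁ y₀)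
    (differentiableOn_inner_apply_smul_add hG x₀ x₁ y₁), hderiv.deriv]
  simp

theorem re_sq_mul_add_le_of_norm_le_one (hr : 0 < r)
    (hG : ∀ x y, DifferentiableOn ℂ (fun z ↦ ⟪y, G z x⟫_ℂ) (closedBall 0 r))
    (hbd : ∀ z ∈ sphere (0 : ℂ) r, ‖G z‖ ≤ 1) (x₀ x₁ y₀ y₁ : E) :
    re (r ^ 2 * (⟪y₀, G 0 x₀⟫_ℂ + deriv (fun z ↦ ⟪y₀, G z x₁⟫_ℂ) 0) + ⟪y₁, G 0 x₁⟫_ℂ)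
      ≤ (r ^ 2 * (‖x₀‖ ^ 2 + ‖y₀‖ ^ 2) + (‖x₁‖ ^ 2 + ‖y₁‖ ^ 2)) / 2 := by
  have hsphere : sphere (0 : ℂ) |r| ⊆ closedBall 0 r := by
    rw [abs_of_pos hr]; exact sphere_subset_closedBall
  have hint : ∀ {H : ℂ → E →L[ℂ] E},
      (∀ x y, DifferentiableOn ℂ (fun z ↦ ⟪y, H z x⟫_ℂ) (closedBall 0 r)) → ∀ x₀ x₁ y₀ y₁ : E,
      CircleIntegrable (fun w ↦ ⟪w • y₀ + y₁, H w (w • x₀ + x₁)⟫_ℂ) 0 r := fun hH _ _ _ _ ↦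
    ((continuousOn_inner_smul_add_apply_smul_add hH _ _ _ _).mono hsphere).circleIntegrable'
  have hid : ∀ x₀ x₁ : E, circleAverage (fun w ↦ ⟪w • x₀ + x₁, w • x₀ + x₁⟫_ℂ) 0 r
      = r ^ 2 * ‖x₀‖ ^ 2 + ‖x₁‖ ^ 2 := fun x₀ x₁ ↦ by
    simpa [inner_self_eq_norm_sq_to_K] using circleAverage_inner_smul_add_apply_smul_add
      (G := fun _ ↦ ContinuousLinearMap.id ℂ E) hr (fun _ _ ↦ differentiableOn_const _) x₀ x₁ x₀ x₁
  have hidInt : ∀ x₀ x₁ : E, CircleIntegrable (fun w ↦ ⟪w • x₀ + x₁, w • x₀ + x₁⟫_ℂ) 0 r :=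
    fun x₀ x₁ ↦ hint (H := fun _ ↦ ContinuousLinearMap.id ℂ E)
      (fun _ _ ↦ differentiableOn_const _) x₀ x₁ x₀ x₁
  have hmono := re_circleAverage_le_re_circleAverage
    (f := (2 : ℂ) • fun w ↦ ⟪w • y₀ + y₁, G w (w • x₀ + x₁)⟫_ℂ)
    (g := (fun w ↦ ⟪w • x₀ + x₁, w • x₀ + x₁⟫_ℂ) + fun w ↦ ⟪w • y₀ + y₁, w • y₀ + y₁⟫_ℂ)
    (hint hG x₀ x₁ y₀ y₁).const_smul ((hidInt x₀ x₁).add (hidInt y₀ y₁)) fun w hw ↦ by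
      have := re_inner_apply_le_of_norm_le_one (hbd w (by rwa [abs_of_pos hr] at hw))
        (w • x₀ + x₁) (w • y₀ + y₁)
      simp only [Pi.smul_apply, Pi.add_apply, smul_eq_mul, mul_re, re_ofNat, im_ofNat, zero_mul,
        sub_zero, add_re, inner_self_eq_norm_sq_to_K, coe_algebraMap, ← ofReal_pow, ofReal_re]
      linarith
  rw [circleAverage_smul, circleAverage_add (hidInt x₀ x₁) (hidInt y₀ y₁), hid, hid,
    circleAverage_inner_smul_add_apply_smul_add hr hG] at hmono
  simp only [smul_eq_mul, mul_re, re_ofNat, im_ofNat, add_re, ← ofReal_pow, ofReal_re, ofReal_im,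
    zero_mul, sub_zero] at hmono ⊢
  linarith

theorem re_inner_add_deriv_add_le_of_norm_le_one
    (hG : ∀ x y, DifferentiableOn ℂ (fun z ↦ ⟪y, G z x⟫_ℂ) (ball 0 1))
    (hbd : ∀ z ∈ ball (0 : ℂ) 1, ‖G z‖ ≤ 1) (x₀ x₁ y₀ y₁ : E) :
    re (⟪y₀, G 0 x₀⟫_ℂ + deriv (fun z ↦ ⟪y₀, G z x₁⟫_ℂ) 0 + ⟪y₁, G 0 x₁⟫_ℂ)
      ≤ (‖x₀‖ ^ 2 + ‖x₁‖ ^ 2 + ‖y₀‖ ^ 2 + ‖y₁‖ ^ 2) / 2 := by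
  have hr : ∀ r : ℝ, 0 < r → r < 1 →
      r ^ 2 * (re (⟪y₀, G 0 x₀⟫_ℂ + deriv (fun z ↦ ⟪y₀, G z x₁⟫_ℂ) 0)
        - (‖x₀‖ ^ 2 + ‖y₀‖ ^ 2) / 2) ≤ (‖x₁‖ ^ 2 + ‖y₁‖ ^ 2) / 2 - re ⟪y₁, G 0 x₁⟫_ℂ := by
    intro r hr0 hr1
    have hball : closedBall (0 : ℂ) r ⊆ ball 0 1 := closedBall_subset_ball hr1
    have := re_sq_mul_add_le_of_norm_le_one hr0 (fun x y ↦ (hG x y).mono hball)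
      (fun z hz ↦ hbd z (hball (sphere_subset_closedBall hz))) x₀ x₁ y₀ y₁
    rw [add_re, ← ofReal_pow, re_ofReal_mul] at this
    linarith
  rw [add_re]
  linarith [le_of_forall_sq_mul_le hr]
end

theorem ContinuousLinearMap.opNorm_le_one_of_re_inner_apply_le {E : Type*}
    [NormedAddCommGroup E] [InnerProductSpace ℂ E] {T : E →L[ℂ] E}
    (h : ∀ u v, re ⟪u, T v⟫_ℂ ≤ (‖u‖ ^ 2 + ‖v‖ ^ 2) / 2) : ‖T‖ ≤ 1 := by
  refine T.opNorm_le_bound zero_le_one fun v ↦ ?_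
  have hTv := h (T v) v
  rw [show re ⟪T v, T v⟫_ℂ = ‖T v‖ ^ 2 from inner_self_eq_norm_sq (𝕜 := ℂ) _] at hTv
  nlinarith [norm_nonneg (T v), norm_nonneg v]

theorem EuclideanSpace.norm_sq_eq_sumEquivProd {𝕜 : Type*} [RCLike 𝕜] {m n : Type*} [Fintype m]
    [Fintype n] (u : EuclideanSpace 𝕜 (m ⊕ n)) :
    ‖u‖ ^ 2 = ‖(sumEquivProd u).1‖ ^ 2 + ‖(sumEquivProd u).2‖ ^ 2 := by
  simp [EuclideanSpace.norm_sq_eq, Fintype.sum_sum_type]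

section Matrix

open Matrix

variable {n : Type*} [Fintype n] [DecidableEq n]

theorem inner_toEuclideanCLM_eq_sum (M : Matrix n n ℂ) (x y : EuclideanSpace ℂ n) :
    ⟪y, toEuclideanCLM (𝕜 := ℂ) M x⟫_ℂ = ∑ i, ∑ j, conj (y i) * x j * M i j := by
  simp only [EuclideanSpace.inner_eq_star_dotProduct, ofLp_toEuclideanCLM, dotProduct, mulVec,
    Finset.sum_mul]
  refine Finset.sum_congr rfl fun i _ ↦ Finset.sum_congr rfl fun j _ ↦ ?_
  simp only [Pi.star_apply, RCLike.star_def]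
  ring

theorem hasDerivAt_inner_toEuclideanCLM {F : ℂ → Matrix n n ℂ} {F' : Matrix n n ℂ} {z : ℂ}
    (hF : ∀ i j, HasDerivAt (fun z ↦ F z i j) (F' i j) z) (x y : EuclideanSpace ℂ n) :
    HasDerivAt (fun z ↦ ⟪y, toEuclideanCLM (𝕜 := ℂ) (F z) x⟫_ℂ)
      ⟪y, toEuclideanCLM (𝕜 := ℂ) F' x⟫_ℂ z := by
  simp only [inner_toEuclideanCLM_eq_sum]
  exact HasDerivAt.fun_sum fun i _ ↦ HasDerivAt.fun_sum fun j _ ↦ (hF i j).const_mul _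

theorem inner_toEuclideanCLM_fromBlocks (A B C D : Matrix n n ℂ)
    (u v : EuclideanSpace ℂ (n ⊕ n)) :
    ⟪u, toEuclideanCLM (𝕜 := ℂ) (fromBlocks A B C D) v⟫_ℂ =
      ⟪(EuclideanSpace.sumEquivProd u).1,
          toEuclideanCLM (𝕜 := ℂ) A (EuclideanSpace.sumEquivProd v).1⟫_ℂ
        + ⟪(EuclideanSpace.sumEquivProd u).1,
          toEuclideanCLM (𝕜 := ℂ) B (EuclideanSpace.sumEquivProd v).2⟫_ℂ
        + ⟪(EuclideanSpace.sumEquivProd u).2,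
          toEuclideanCLM (𝕜 := ℂ) C (EuclideanSpace.sumEquivProd v).1⟫_ℂ
        + ⟪(EuclideanSpace.sumEquivProd u).2,
          toEuclideanCLM (𝕜 := ℂ) D (EuclideanSpace.sumEquivProd v).2⟫_ℂ := by
  simp only [EuclideanSpace.inner_eq_star_dotProduct, ofLp_toEuclideanCLM, fromBlocks_mulVec]
  simp [dotProduct, Fintype.sum_sum_type, mulVec, Finset.sum_add_distrib, add_mul]
  ring

end Matrix

/-- If `F(z) = A₁ + A₂ z + ⋯` is holomorphic on the unit disc with values in the open unit
ball of `M_k(ℂ)` (operator norm), then `‖[[A₁, A₂], [0, A₁]]‖ ≤ 1`. -/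
theorem stmt18 (k : ℕ) (F : ℂ → Matrix (Fin k) (Fin k) ℂ)
    (hdiff : ∀ i j, DifferentiableOn ℂ (fun z => F z i j) (Metric.ball 0 1))
    (hbd : ∀ z ∈ Metric.ball (0 : ℂ) 1, ‖Matrix.toEuclideanCLM (𝕜 := ℂ) (F z)‖ < 1)
    (A₁ A₂ : Matrix (Fin k) (Fin k) ℂ)
    (hA₁ : A₁ = F 0) (hA₂ : ∀ i j, A₂ i j = deriv (fun z => F z i j) 0) :
    ‖Matrix.toEuclideanCLM (𝕜 := ℂ) (Matrix.fromBlocks A₁ A₂ 0 A₁)‖ ≤ 1 := by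
  have hF : ∀ z ∈ ball (0 : ℂ) 1, ∀ i j, HasDerivAt (fun z ↦ F z i j) (deriv (F · i j) z) z :=
    fun z hz i j ↦ ((hdiff i j).differentiableAt (isOpen_ball.mem_nhds hz)).hasDerivAt
  have hG : ∀ x y, DifferentiableOn ℂ
      (fun z ↦ ⟪y, Matrix.toEuclideanCLM (𝕜 := ℂ) (F z) x⟫_ℂ) (ball 0 1) := fun x y z hz ↦
    (hasDerivAt_inner_toEuclideanCLM (hF z hz) x y).differentiableAt.differentiableWithinAt
  have hF₀ : ∀ i j, HasDerivAt (fun z ↦ F z i j) (A₂ i j) 0 := by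
    simpa only [hA₂] using hF 0 (mem_ball_self one_pos)
  refine ContinuousLinearMap.opNorm_le_one_of_re_inner_apply_le fun u v ↦ ?_
  have key := re_inner_add_deriv_add_le_of_norm_le_one hG (fun z hz ↦ (hbd z hz).le)
    (EuclideanSpace.sumEquivProd v).1 (EuclideanSpace.sumEquivProd v).2
    (EuclideanSpace.sumEquivProd u).1 (EuclideanSpace.sumEquivProd u).2
  rw [(hasDerivAt_inner_toEuclideanCLM hF₀ _ _).deriv, ← hA₁] at key
  rw [inner_toEuclideanCLM_fromBlocks, map_zero, zero_apply, inner_zero_right, add_zero,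
    EuclideanSpace.norm_sq_eq_sumEquivProd u, EuclideanSpace.norm_sq_eq_sumEquivProd v]
  linarith
end
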